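/- arXiv:2211.11141 — 6 statements merged into one kernel-verified Lean document; each statement's English description precedes it below -/
import Mathlib

section
/- Let G=(V,E) be an undirected graph with edge weights w:E→ℝ≥0, let p* be a path from s to t with edge set E_{p*}, and let E'⊆E with E'∩E_{p*}=∅. Then p* is strictly shorter than every other s–t path in G'=(V,E∖E') if and only if every s–t path p in G with p≠p* whose total weight is at most the total weight of p* contains at least one edge of E'. -/
/-- The total weight of a walk: the sum of the weights of its edges. -/
def walkWeight {V : Type*} {G : SimpleGraph V} (w : Sym2 V → ℝ) {u v : V}
    (p : G.Walk u v) : ℝ :=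
  (p.edges.map w).sum

lemma walkWeight_transfer {V : Type*} {G H : SimpleGraph V} (w : Sym2 V → ℝ) {u v : V}
    (p : G.Walk u v) (hp : ∀ e ∈ p.edges, e ∈ H.edgeSet) :
    walkWeight w (p.transfer H hp) = walkWeight w p := by
  simp [walkWeight, SimpleGraph.Walk.edges_transfer]

lemma edges_mapLe {V : Type*} {G H : SimpleGraph V} (h : G ≤ H) {u v : V}
    (q : G.Walk u v) : (q.mapLe h).edges = q.edges := by
  rw [SimpleGraph.Walk.mapLe, ← SimpleGraph.Walk.transfer_eq_map_ofLE (p := q)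
    (fun e he => (SimpleGraph.edgeSet_subset_edgeSet.mpr h) (q.edges_subset_edgeSet he)) h,
    SimpleGraph.Walk.edges_transfer]

/-- Let `G` be an undirected graph with nonnegative edge weights `w`,
`p*` an `s`–`t` path, and `E' ⊆ E(G)` disjoint from the edges of `p*`.  Then `p*` is
strictly shorter than every other `s`–`t` path in `G' = (V, E ∖ E')` iff every `s`–`t`
path `p ≠ p*` of `G` whose total weight is at most that of `p*` contains an edge of `E'`. -/
theorem stmt0 {V : Type*} (G : SimpleGraph V) (w : Sym2 V → ℝ) (hw : ∀ e, 0 ≤ w e)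
    (s t : V) (hst : s ≠ t) (pstar : G.Walk s t) (hpstar : pstar.IsPath)
    (E' : Set (Sym2 V)) (hE'sub : E' ⊆ G.edgeSet)
    (hdisj : ∀ e ∈ pstar.edges, e ∉ E') :
    (∀ q : (G.deleteEdges E').Walk s t, q.IsPath →
        q.mapLe (SimpleGraph.deleteEdges_le E') ≠ pstar →
        walkWeight w pstar < walkWeight w q) ↔
      (∀ p : G.Walk s t, p.IsPath → p ≠ pstar →
        walkWeight w p ≤ walkWeight w pstar → ∃ e ∈ p.edges, e ∈ E') := by
  constructor
  · intro h p hp hne hle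
    by_contra hcon
    push_neg at hcon
    set q := p.toDeleteEdges E' hcon with hq
    have hmap : q.mapLe (SimpleGraph.deleteEdges_le E') = p :=
      SimpleGraph.Walk.map_toDeleteEdges_eq E' hcon
    have hqpath : q.IsPath := hp.transfer _
    have := h q hqpath (by rw [hmap]; exact hne)
    have hweq : walkWeight w q = walkWeight w p := walkWeight_transfer w p _
    rw [hweq] at this
    exact absurd hle (not_le.mpr this)
  · intro h q hqpath hne
    set p := q.mapLe (SimpleGraph.deleteEdges_le E') with hp
    have hppath : p.IsPath := hqpath.mapLe _
    have hweq : walkWeight w p = walkWeight w q := by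
      rw [walkWeight, walkWeight, hp, edges_mapLe]
    by_contra hcon
    push_neg at hcon
    rw [← hweq] at hcon
    obtain ⟨e, he, heE'⟩ := h p hppath hne hcon
    have : e ∈ (G.deleteEdges E').edgeSet := by
      have heq : p.edges = q.edges := by
        rw [hp, edges_mapLe]
      rw [heq] at he
      exact q.edges_subset_edgeSet he
    rw [SimpleGraph.edgeSet_deleteEdges] at this
    exact this.2 heE'
end

section
/- Let G=(V,E) be an undirected unweighted graph with three distinct terminals s1,s2,s3, and let Ĝ=(V̂,Ê) with target path p* be the augmented graph built from G. If E'⊆E disconnects s1, s2, and s3 pairwise in G, then E' is a Force Path Cut solution for (Ĝ,p*): after removing E' from Ĝ, p* is strictly shorter than every other s1–s3 path. -/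
open SimpleGraph Walk

section Aux

variable {A : Type*} {K : SimpleGraph A}

lemma FPC_loop_nil {u : A} {p : K.Walk u u} (hp : p.IsPath) : p = SimpleGraph.Walk.nil := by
  cases p with
  | nil => rfl
  | cons h q =>
    rw [Walk.cons_isPath_iff] at hp
    exact absurd q.end_mem_support hp.2

lemma FPC_head_edge {u v x : A} {p : K.Walk u v} (hp : p.IsPath) (hx : s(u, x) ∈ p.edges) :
    x = p.getVert 1 := by
  cases p with
  | nil => simp at hx
  | cons h q =>
    rw [Walk.edges_cons, List.mem_cons] at hx
    rcases hx with hx | hx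
    · rw [Sym2.eq_iff] at hx
      rcases hx with ⟨-, rfl⟩ | ⟨rfl, rfl⟩
      · rw [Walk.getVert_cons_succ, Walk.getVert_zero]
      · exact (K.loopless.irrefl _ h).elim
    · rw [Walk.cons_isPath_iff] at hp
      exact absurd (Walk.fst_mem_support_of_mem_edges q hx) hp.2

lemma FPC_edge_one {u v : A} {p : K.Walk u v} (hp : p.IsPath) (hx : s(u, v) ∈ p.edges) :
    p.length = 1 := by
  cases p with
  | nil => simp at hx
  | cons h q =>
    rw [Walk.edges_cons, List.mem_cons] at hx
    rcases hx with hx | hx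
    · rw [Sym2.eq_iff] at hx
      rcases hx with ⟨-, rfl⟩ | ⟨rfl, rfl⟩
      · rw [FPC_loop_nil hp.of_cons, Walk.length_cons, Walk.length_nil]
      · exact (K.loopless.irrefl _ h).elim
    · rw [Walk.cons_isPath_iff] at hp
      exact absurd (Walk.fst_mem_support_of_mem_edges q hx) hp.2

lemma FPC_edges_at {u v c : A} {p : K.Walk u v} (hp : p.IsPath) (hc : c ∈ p.support) :
    ∃ a b, ∀ x, s(c, x) ∈ p.edges → x = a ∨ x = b := by
  classical
  refine ⟨(p.takeUntil c hc).reverse.getVert 1, (p.dropUntil c hc).getVert 1, fun x hx => ?_⟩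
  rw [← Walk.take_spec p hc, Walk.edges_append, List.mem_append] at hx
  rcases hx with hx | hx
  · exact Or.inl (FPC_head_edge (hp.takeUntil hc).reverse
      (by rw [Walk.edges_reverse, List.mem_reverse]; exact hx))
  · exact Or.inr (FPC_head_edge (hp.dropUntil hc) hx)

lemma FPC_edge_getVert {a b : A} : ∀ {u v : A} (p : K.Walk u v), s(a, b) ∈ p.edges →
    ∃ k, k + 1 ≤ p.length ∧ ((p.getVert k = a ∧ p.getVert (k + 1) = b) ∨
      (p.getVert k = b ∧ p.getVert (k + 1) = a)) := by
  intro u v p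
  induction p with
  | nil => intro hab; simp at hab
  | cons h q ih =>
    intro hab
    rw [Walk.edges_cons, List.mem_cons] at hab
    rcases hab with hab | hab
    · refine ⟨0, by rw [Walk.length_cons]; omega, ?_⟩
      rw [Sym2.eq_iff] at hab
      rcases hab with ⟨rfl, rfl⟩ | ⟨rfl, rfl⟩
      · exact Or.inl ⟨Walk.getVert_zero _, by rw [Walk.getVert_cons_succ, Walk.getVert_zero]⟩
      · exact Or.inr ⟨Walk.getVert_zero _, by rw [Walk.getVert_cons_succ, Walk.getVert_zero]⟩
    · obtain ⟨k, hk, hor⟩ := ih hab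
      refine ⟨k + 1, by rw [Walk.length_cons]; omega, ?_⟩
      rw [Walk.getVert_cons_succ, Walk.getVert_cons_succ]
      exact hor

lemma FPC_getVert_injOn : ∀ {u v : A} {p : K.Walk u v}, p.IsPath →
    ∀ i j, i ≤ p.length → j ≤ p.length → p.getVert i = p.getVert j → i = j := by
  intro u v p
  induction p with
  | nil => intro _ i j hi hj _; rw [Walk.length_nil] at hi hj; omega
  | cons h q ih =>
    intro hp i j hi hj he
    rw [Walk.cons_isPath_iff] at hp
    rw [Walk.length_cons] at hi hj
    cases i with
    | zero =>
      cases j with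
      | zero => rfl
      | succ j =>
        exfalso
        rw [Walk.getVert_zero, Walk.getVert_cons_succ] at he
        exact hp.2 (Walk.mem_support_iff_exists_getVert.mpr ⟨j, he.symm, by omega⟩)
    | succ i =>
      cases j with
      | zero =>
        exfalso
        rw [Walk.getVert_zero, Walk.getVert_cons_succ] at he
        exact hp.2 (Walk.mem_support_iff_exists_getVert.mpr ⟨i, he, by omega⟩)
      | succ j =>
        rw [Walk.getVert_cons_succ, Walk.getVert_cons_succ] at he
        have := ih hp.1 i j (by omega) (by omega) he
        omega

open Classical in
noncomputable def FPC_wpos {x y : A} (p : K.Walk x y) (z : A) : ℕ :=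
  if h : ∃ n, p.getVert n = z ∧ n ≤ p.length then h.choose else 0

lemma FPC_wpos_eq {x y : A} {p : K.Walk x y} (hp : p.IsPath) {k : ℕ} (hk : k ≤ p.length) :
    FPC_wpos p (p.getVert k) = k := by
  have hz : ∃ n, p.getVert n = p.getVert k ∧ n ≤ p.length := ⟨k, rfl, hk⟩
  rw [FPC_wpos, dif_pos hz]
  obtain ⟨h1, h2⟩ := hz.choose_spec
  exact FPC_getVert_injOn hp _ _ h2 hk h1

lemma FPC_lip (f : A → ℕ) (hf : ∀ a b, K.Adj a b → f b ≤ f a + 1) :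
    ∀ {x y : A} (q : K.Walk x y), f y ≤ f x + q.length := by
  intro x y q
  induction q with
  | nil => simp
  | cons h r ih =>
    rw [Walk.length_cons]
    have := hf _ _ h
    omega

lemma FPC_follow {u v : A} (P : K.Walk u v) (hP : P.IsPath)
    (hdeg : ∀ c ∈ P.support, c ≠ u → c ≠ v → ∀ x, K.Adj c x → s(c, x) ∈ P.edges) :
    ∀ {c : A} (σ : K.Walk c u), σ.IsPath →
      (∀ e ∈ σ.edges, e ∈ P.edges) →
      (∀ x ∈ σ.support, x ∈ P.support) →
      (∀ x ∈ σ.support, x = c ∨ x ≠ v) →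
      ∀ (m : K.Walk c u), m.IsPath →
      (∀ z (hz : K.Adj c z) (m' : K.Walk z u), m = Walk.cons hz m' → s(c, z) ∈ P.edges) →
      (c = v ∨ ∃ c₀, s(c₀, c) ∈ P.edges ∧ c₀ ∉ m.support ∧
        ∀ w' (hw' : K.Adj c w') (σ' : K.Walk w' u), σ = Walk.cons hw' σ' → w' ≠ c₀) →
      m = σ := by
  suffices H : ∀ (n : ℕ) {c : A} (σ : K.Walk c u), σ.length = n → σ.IsPath →
      (∀ e ∈ σ.edges, e ∈ P.edges) →
      (∀ x ∈ σ.support, x ∈ P.support) →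
      (∀ x ∈ σ.support, x = c ∨ x ≠ v) →
      ∀ (m : K.Walk c u), m.IsPath →
      (∀ z (hz : K.Adj c z) (m' : K.Walk z u), m = Walk.cons hz m' → s(c, z) ∈ P.edges) →
      (c = v ∨ ∃ c₀, s(c₀, c) ∈ P.edges ∧ c₀ ∉ m.support ∧
        ∀ w' (hw' : K.Adj c w') (σ' : K.Walk w' u), σ = Walk.cons hw' σ' → w' ≠ c₀) →
      m = σ by
    intro c σ h1 h2 h3 h4 m h5 h6 h7
    exact H σ.length σ rfl h1 h2 h3 h4 m h5 h6 h7
  intro n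
  induction n using Nat.strong_induction_on with
  | _ n ihn =>
  intro c σ hlen hσ hsub hsupP hvinv m hm hm1 hc0
  cases σ with
  | nil =>
    exact FPC_loop_nil hm
  | @cons _ w _ hcw σ' =>
    have ih := fun h1 h2 h3 h4 (m0 : K.Walk w u) h5 h6 h7 =>
      ihn σ'.length (by rw [← hlen, Walk.length_cons]; omega) σ' rfl h1 h2 h3 h4 m0 h5 h6 h7
    have hσ'P : σ'.IsPath := hσ.of_cons
    have hcσ' : c ∉ σ'.support := ((Walk.cons_isPath_iff _ _).mp hσ).2
    have hcu : c ≠ u := by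
      rintro rfl
      exact hcσ' σ'.end_mem_support
    obtain ⟨z, hcz, m', rfl⟩ : ∃ (z : A) (hcz : K.Adj c z) (m' : K.Walk z u),
        m = Walk.cons hcz m' := by
      cases m with
      | nil => exact absurd rfl hcu
      | cons h' m'' => exact ⟨_, h', m'', rfl⟩
    have hczP : s(c, z) ∈ P.edges := hm1 z hcz m' rfl
    have hcwP : s(c, w) ∈ P.edges := hsub _ (by rw [Walk.edges_cons]; exact List.mem_cons_self)
    have hzw : z = w := by
      rcases hc0 with rfl | ⟨c₀, hc₀e, hc₀m, hc₀σ⟩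
      · have hv : ∀ x, s(c, x) ∈ P.edges → x = P.reverse.getVert 1 := fun x hx =>
          FPC_head_edge hP.reverse (by rw [Walk.edges_reverse, List.mem_reverse]; exact hx)
        rw [hv z hczP, hv w hcwP]
      · obtain ⟨a, b, hab⟩ := FPC_edges_at hP (hsupP c (Walk.start_mem_support _))
        have hza := hab z hczP
        have hwa := hab w hcwP
        have hca := hab c₀ (by rwa [Sym2.eq_swap] at hc₀e)
        have hzc₀ : z ≠ c₀ := by
          intro h
          apply hc₀m
          rw [Walk.support_cons]
          exact List.mem_cons_of_mem _ (h ▸ m'.start_mem_support)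
        have hwc₀ : w ≠ c₀ := hc₀σ w hcw σ' rfl
        rcases hca with rfl | rfl
        · rw [hza.resolve_left hzc₀, hwa.resolve_left hwc₀]
        · rw [hza.resolve_right hzc₀, hwa.resolve_right hwc₀]
    subst hzw
    have hm'σ' : m' = σ' := by
      apply ih hσ'P
      · exact fun e he => hsub e (by rw [Walk.edges_cons]; exact List.mem_cons_of_mem _ he)
      · exact fun x hx => hsupP x (by rw [Walk.support_cons]; exact List.mem_cons_of_mem _ hx)
      · intro x hx
        rcases hvinv x (by rw [Walk.support_cons]; exact List.mem_cons_of_mem _ hx) with rfl | h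
        · exact absurd hx hcσ'
        · exact Or.inr h
      · exact hm.of_cons
      · intro z' hz' m'' hm''
        by_cases hwu : z = u
        · subst hwu
          have hnil := FPC_loop_nil hm.of_cons
          rw [hm''] at hnil
          exact absurd hnil (by simp)
        · have hzsup : z ∈ σ'.support := σ'.start_mem_support
          have hwsup : z ∈ P.support := hsupP z
            (by rw [Walk.support_cons]; exact List.mem_cons_of_mem _ hzsup)
          have hwv : z ≠ v := by
            rcases hvinv z (by rw [Walk.support_cons]; exact List.mem_cons_of_mem _ hzsup)
              with h | h
            · exact absurd (h ▸ hzsup) hcσ'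
            · exact h
          exact hdeg z hwsup hwu hwv z' hz'
      · right
        refine ⟨c, hcwP, ((Walk.cons_isPath_iff _ _).mp hm).2, ?_⟩
        intro w' hw' σ'' hσ''
        intro hcon
        apply hcσ'
        rw [hσ'', Walk.support_cons]
        exact List.mem_cons_of_mem _ (hcon ▸ σ''.start_mem_support)
    rw [hm'σ']

end Aux


/-- `E'` is a Force Path Cut solution for the graph `G` with unit edge weights and
target path `p`: it consists of edges of `G`, avoids the edges of `p`, and after
deleting it `p` is strictly shorter than every other path between its endpoints. -/
def FPCSol {V : Type*} (G : SimpleGraph V) {s t : V} (p : G.Walk s t)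
    (E' : Set (Sym2 V)) : Prop :=
  E' ⊆ G.edgeSet ∧ (∀ e ∈ p.edges, e ∉ E') ∧
    ∀ q : (G.deleteEdges E').Walk s t, q.IsPath →
      q.mapLe (SimpleGraph.deleteEdges_le E') ≠ p → p.length < q.length

/-- `E'` disconnects the three terminals `s1, s2, s3` pairwise in `G`. -/
def Disconnects {V : Type*} (G : SimpleGraph V) (E' : Set (Sym2 V))
    (s1 s2 s3 : V) : Prop :=
  ¬ (G.deleteEdges E').Reachable s1 s2 ∧ ¬ (G.deleteEdges E').Reachable s1 s3 ∧
    ¬ (G.deleteEdges E').Reachable s2 s3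

/-- `Ghat` (a graph on `V ⊕ W`, where `W` is the type of new vertices) together with
the data of the added paths is the augmented graph built from `G` and the terminals
`s1, s2, s3` in the 3-Terminal Cut reduction: it consists of a copy of `G`, plus
`M+1` internally disjoint new paths of `N` hops from `s1` to `s2`, `M+1` internally
disjoint new paths of `N` hops from `s2` to `s3`, and one new path `pstar` of
`2N - 1` hops from `s1` to `s3`, all internal vertices being new and distinct. -/
structure AugSpec {V W : Type*} (G : SimpleGraph V) (s1 s2 s3 : V) (N M : ℕ)
    (Ghat : SimpleGraph (V ⊕ W)) where
  P1 : Fin (M + 1) → Ghat.Walk (Sum.inl s1) (Sum.inl s2)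
  P2 : Fin (M + 1) → Ghat.Walk (Sum.inl s2) (Sum.inl s3)
  pstar : Ghat.Walk (Sum.inl s1) (Sum.inl s3)
  P1_isPath : ∀ i, (P1 i).IsPath
  P2_isPath : ∀ i, (P2 i).IsPath
  pstar_isPath : pstar.IsPath
  P1_length : ∀ i, (P1 i).length = N
  P2_length : ∀ i, (P2 i).length = N
  pstar_length : pstar.length = 2 * N - 1
  P1_new : ∀ i, ∀ v ∈ (P1 i).support,
    v ≠ Sum.inl s1 → v ≠ Sum.inl s2 → ∃ x : W, v = Sum.inr x
  P2_new : ∀ i, ∀ v ∈ (P2 i).support,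
    v ≠ Sum.inl s2 → v ≠ Sum.inl s3 → ∃ x : W, v = Sum.inr x
  pstar_new : ∀ v ∈ pstar.support,
    v ≠ Sum.inl s1 → v ≠ Sum.inl s3 → ∃ x : W, v = Sum.inr x
  P1_disj : ∀ i j, i ≠ j → ∀ v ∈ (P1 i).support, v ∈ (P1 j).support →
    v = Sum.inl s1 ∨ v = Sum.inl s2
  P2_disj : ∀ i j, i ≠ j → ∀ v ∈ (P2 i).support, v ∈ (P2 j).support →
    v = Sum.inl s2 ∨ v = Sum.inl s3
  P1_P2_disj : ∀ i j, ∀ v ∈ (P1 i).support, v ∈ (P2 j).support → v = Sum.inl s2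
  P1_pstar_disj : ∀ i, ∀ v ∈ (P1 i).support, v ∈ pstar.support → v = Sum.inl s1
  P2_pstar_disj : ∀ i, ∀ v ∈ (P2 i).support, v ∈ pstar.support → v = Sum.inl s3
  adj_iff : ∀ x y : V ⊕ W, Ghat.Adj x y ↔
    ((∃ u v : V, x = Sum.inl u ∧ y = Sum.inl v ∧ G.Adj u v) ∨
      (∃ i, s(x, y) ∈ (P1 i).edges) ∨ (∃ i, s(x, y) ∈ (P2 i).edges) ∨
      s(x, y) ∈ pstar.edges)

/-- If `E' ⊆ E(G)` disconnects the three terminals pairwise in `G`,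
then (its image in the augmented graph) is a Force Path Cut solution for `(Ĝ, p*)`. -/
theorem stmt1 {V W : Type*} [Fintype V] [DecidableEq V]
    (G : SimpleGraph V) [DecidableRel G.Adj] (s1 s2 s3 : V)
    (h12 : s1 ≠ s2) (h13 : s1 ≠ s3) (h23 : s2 ≠ s3)
    (Ghat : SimpleGraph (V ⊕ W))
    (A : AugSpec G s1 s2 s3 (Fintype.card V) G.edgeFinset.card Ghat)
    (E' : Set (Sym2 V)) (hE'sub : E' ⊆ G.edgeSet)
    (hdisc : Disconnects G E' s1 s2 s3) :
    FPCSol Ghat A.pstar (Sym2.map Sum.inl '' E') := by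
  classical
  obtain ⟨hn12, hn13, hn23⟩ := hdisc
  obtain ⟨N, hNdef⟩ : ∃ n : ℕ, n = Fintype.card V := ⟨_, rfl⟩
  have hP1len : ∀ i, (A.P1 i).length = N := fun i => by rw [hNdef]; exact A.P1_length i
  have hP2len : ∀ i, (A.P2 i).length = N := fun i => by rw [hNdef]; exact A.P2_length i
  have hpl : A.pstar.length = 2 * N - 1 := by rw [hNdef]; exact A.pstar_length
  have hN3 : 3 ≤ N := by
    have hcard : ({s1, s2, s3} : Finset V).card = 3 := by
      rw [Finset.card_insert_of_notMem (by simp [h12, h13]),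
        Finset.card_insert_of_notMem (by simp [h23]), Finset.card_singleton]
    rw [hNdef]
    calc 3 = ({s1, s2, s3} : Finset V).card := hcard.symm
      _ ≤ Fintype.card V := Finset.card_le_univ _
  refine ⟨?_, ?_, ?_⟩
  · -- E'' ⊆ edgeSet
    rintro e ⟨e₀, he₀, rfl⟩
    revert he₀
    refine Sym2.ind (fun x y he₀ => ?_) e₀
    rw [Sym2.map_pair_eq, SimpleGraph.mem_edgeSet]
    exact (A.adj_iff _ _).mpr (Or.inl ⟨x, y, rfl, rfl, (G.mem_edgeSet).mp (hE'sub he₀)⟩)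
  · -- pstar edges avoid E''
    intro e he hmem
    obtain ⟨e₀, he₀, heq⟩ := hmem
    revert he₀ heq
    refine Sym2.ind (fun x y he₀ heq => ?_) e₀
    rw [Sym2.map_pair_eq] at heq
    subst heq
    have hxy : G.Adj x y := (G.mem_edgeSet).mp (hE'sub he₀)
    have hxyne : x ≠ y := G.ne_of_adj hxy
    have hxs : Sum.inl x = (Sum.inl s1 : V ⊕ W) ∨ Sum.inl x = (Sum.inl s3 : V ⊕ W) := by
      by_contra hcon
      push_neg at hcon
      obtain ⟨w0, hw0⟩ := A.pstar_new _ (Walk.fst_mem_support_of_mem_edges _ he) hcon.1 hcon.2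
      simp at hw0
    have hys : Sum.inl y = (Sum.inl s1 : V ⊕ W) ∨ Sum.inl y = (Sum.inl s3 : V ⊕ W) := by
      by_contra hcon
      push_neg at hcon
      obtain ⟨w0, hw0⟩ := A.pstar_new _ (Walk.snd_mem_support_of_mem_edges _ he) hcon.1 hcon.2
      simp at hw0
    have hkey : s(Sum.inl x, Sum.inl y) = s((Sum.inl s1 : V ⊕ W), Sum.inl s3) := by
      rcases hxs with hx1 | hx1 <;> rcases hys with hy1 | hy1
      · exact absurd (Sum.inl_injective (hx1.trans hy1.symm)) hxyne
      · rw [hx1, hy1]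
      · rw [hx1, hy1, Sym2.eq_swap]
      · exact absurd (Sum.inl_injective (hx1.trans hy1.symm)) hxyne
    rw [hkey] at he
    have h1 := FPC_edge_one A.pstar_isPath he
    omega
  · -- main inequality
    intro q hq hne
    set R := G.deleteEdges E' with hR
    let f : V ⊕ W → ℕ := Sum.elim
      (fun (a : V) => if R.Reachable s2 a then N else if R.Reachable s3 a then 2 * N else 0)
      (fun (w : W) =>
        if h0 : ∃ n, A.pstar.getVert n = (Sum.inr w : V ⊕ W) ∧ n ≤ A.pstar.length then
          FPC_wpos A.pstar (Sum.inr w)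
        else if h1 : ∃ i, ∃ n, (A.P1 i).getVert n = (Sum.inr w : V ⊕ W) ∧ n ≤ (A.P1 i).length then
          FPC_wpos (A.P1 h1.choose) (Sum.inr w)
        else if h2 : ∃ i, ∃ n, (A.P2 i).getVert n = (Sum.inr w : V ⊕ W) ∧ n ≤ (A.P2 i).length then
          N + FPC_wpos (A.P2 h2.choose) (Sum.inr w)
        else 0)
    have hfs1 : f (Sum.inl s1) = 0 := by
      simp only [f, Sum.elim_inl]
      rw [if_neg (fun h => hn12 h.symm), if_neg (fun h => hn13 h.symm)]
    have hfs2 : f (Sum.inl s2) = N := by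
      simp only [f, Sum.elim_inl]
      rw [if_pos (Reachable.refl s2)]
    have hfs3 : f (Sum.inl s3) = 2 * N := by
      simp only [f, Sum.elim_inl]
      rw [if_neg hn23, if_pos (Reachable.refl s3)]
    have hgv1 : ∀ (i) (k : ℕ), k ≤ N → f ((A.P1 i).getVert k) = k := by
      intro i k hk
      by_cases hk0 : k = 0
      · subst hk0; rw [Walk.getVert_zero]; exact hfs1
      by_cases hkN : k = N
      · have h2 : (A.P1 i).getVert k = Sum.inl s2 := by
          rw [hkN, ← hP1len i, Walk.getVert_length]
        rw [h2, hfs2, hkN]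
      · have hklen : k ≤ (A.P1 i).length := by rw [hP1len i]; omega
        have hmem : (A.P1 i).getVert k ∈ (A.P1 i).support :=
          Walk.mem_support_iff_exists_getVert.mpr ⟨k, rfl, hklen⟩
        have hne1 : (A.P1 i).getVert k ≠ Sum.inl s1 := by
          intro h
          have h0 : (A.P1 i).getVert 0 = Sum.inl s1 := Walk.getVert_zero _
          have := FPC_getVert_injOn (A.P1_isPath i) k 0 hklen (Nat.zero_le _) (h.trans h0.symm)
          omega
        have hne2 : (A.P1 i).getVert k ≠ Sum.inl s2 := by
          intro h
          have hL : (A.P1 i).getVert ((A.P1 i).length) = Sum.inl s2 := Walk.getVert_length _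
          have := FPC_getVert_injOn (A.P1_isPath i) k ((A.P1 i).length) hklen (le_refl _)
            (h.trans hL.symm)
          rw [hP1len i] at this
          omega
        obtain ⟨w0, hw0⟩ := A.P1_new i _ hmem hne1 hne2
        rw [hw0]
        have hps : ¬ ∃ n, A.pstar.getVert n = (Sum.inr w0 : V ⊕ W) ∧ n ≤ A.pstar.length := by
          intro hc
          have := A.P1_pstar_disj i _ (hw0 ▸ hmem) (Walk.mem_support_iff_exists_getVert.mpr hc)
          simp at this
        have hex1 : ∃ j, ∃ n, (A.P1 j).getVert n = (Sum.inr w0 : V ⊕ W) ∧ n ≤ (A.P1 j).length :=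
          ⟨i, Walk.mem_support_iff_exists_getVert.mp (hw0 ▸ hmem)⟩
        simp only [f, Sum.elim_inr]
        rw [dif_neg hps, dif_pos hex1]
        have hchoice : hex1.choose = i := by
          by_contra hcc
          rcases A.P1_disj _ _ hcc _ (Walk.mem_support_iff_exists_getVert.mpr hex1.choose_spec)
            (hw0 ▸ hmem) with h | h <;> simp at h
        rw [hchoice, ← hw0]
        exact FPC_wpos_eq (A.P1_isPath i) hklen
    have hgv2 : ∀ (i) (k : ℕ), k ≤ N → f ((A.P2 i).getVert k) = N + k := by
      intro i k hk
      by_cases hk0 : k = 0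
      · subst hk0; rw [Walk.getVert_zero, hfs2]; omega
      by_cases hkN : k = N
      · have h2 : (A.P2 i).getVert k = Sum.inl s3 := by
          rw [hkN, ← hP2len i, Walk.getVert_length]
        rw [h2, hfs3, hkN]; omega
      · have hklen : k ≤ (A.P2 i).length := by rw [hP2len i]; omega
        have hmem : (A.P2 i).getVert k ∈ (A.P2 i).support :=
          Walk.mem_support_iff_exists_getVert.mpr ⟨k, rfl, hklen⟩
        have hne1 : (A.P2 i).getVert k ≠ Sum.inl s2 := by
          intro h
          have h0 : (A.P2 i).getVert 0 = Sum.inl s2 := Walk.getVert_zero _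
          have := FPC_getVert_injOn (A.P2_isPath i) k 0 hklen (Nat.zero_le _) (h.trans h0.symm)
          omega
        have hne2 : (A.P2 i).getVert k ≠ Sum.inl s3 := by
          intro h
          have hL : (A.P2 i).getVert ((A.P2 i).length) = Sum.inl s3 := Walk.getVert_length _
          have := FPC_getVert_injOn (A.P2_isPath i) k ((A.P2 i).length) hklen (le_refl _)
            (h.trans hL.symm)
          rw [hP2len i] at this
          omega
        obtain ⟨w0, hw0⟩ := A.P2_new i _ hmem hne1 hne2
        rw [hw0]
        have hps : ¬ ∃ n, A.pstar.getVert n = (Sum.inr w0 : V ⊕ W) ∧ n ≤ A.pstar.length := by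
          intro hc
          have := A.P2_pstar_disj i _ (hw0 ▸ hmem) (Walk.mem_support_iff_exists_getVert.mpr hc)
          simp at this
        have hnex1 : ¬ ∃ j, ∃ n, (A.P1 j).getVert n = (Sum.inr w0 : V ⊕ W) ∧
            n ≤ (A.P1 j).length := by
          rintro ⟨j, hj⟩
          have := A.P1_P2_disj j i _ (Walk.mem_support_iff_exists_getVert.mpr hj) (hw0 ▸ hmem)
          simp at this
        have hex2 : ∃ j, ∃ n, (A.P2 j).getVert n = (Sum.inr w0 : V ⊕ W) ∧ n ≤ (A.P2 j).length :=
          ⟨i, Walk.mem_support_iff_exists_getVert.mp (hw0 ▸ hmem)⟩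
        simp only [f, Sum.elim_inr]
        rw [dif_neg hps, dif_neg hnex1, dif_pos hex2]
        have hchoice : hex2.choose = i := by
          by_contra hcc
          rcases A.P2_disj _ _ hcc _ (Walk.mem_support_iff_exists_getVert.mpr hex2.choose_spec)
            (hw0 ▸ hmem) with h | h <;> simp at h
        rw [hchoice, ← hw0]
        rw [FPC_wpos_eq (A.P2_isPath i) hklen]
    have hgvps : ∀ (k : ℕ), k < 2 * N - 1 → f (A.pstar.getVert k) = k := by
      intro k hk
      by_cases hk0 : k = 0
      · subst hk0; rw [Walk.getVert_zero]; exact hfs1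
      · have hklen : k ≤ A.pstar.length := by rw [hpl]; omega
        have hmem : A.pstar.getVert k ∈ A.pstar.support :=
          Walk.mem_support_iff_exists_getVert.mpr ⟨k, rfl, hklen⟩
        have hne1 : A.pstar.getVert k ≠ Sum.inl s1 := by
          intro h
          have h0 : A.pstar.getVert 0 = Sum.inl s1 := Walk.getVert_zero _
          have := FPC_getVert_injOn A.pstar_isPath k 0 hklen (Nat.zero_le _) (h.trans h0.symm)
          omega
        have hne3 : A.pstar.getVert k ≠ Sum.inl s3 := by
          intro h
          have hL : A.pstar.getVert (A.pstar.length) = Sum.inl s3 := Walk.getVert_length _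
          have := FPC_getVert_injOn A.pstar_isPath k (A.pstar.length) hklen (le_refl _)
            (h.trans hL.symm)
          rw [hpl] at this
          omega
        obtain ⟨w0, hw0⟩ := A.pstar_new _ hmem hne1 hne3
        rw [hw0]
        simp only [f, Sum.elim_inr]
        rw [dif_pos (Walk.mem_support_iff_exists_getVert.mp (hw0 ▸ hmem)), ← hw0]
        exact FPC_wpos_eq A.pstar_isPath hklen
    set pen := A.pstar.getVert (A.pstar.length - 1) with hpen
    set elast : Sym2 (V ⊕ W) := s(pen, Sum.inl s3) with helast
    have hlenpos : 1 ≤ A.pstar.length := by rw [hpl]; omega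
    have hlip : ∀ a b, (Ghat.deleteEdges ((Sym2.map Sum.inl '' E') ∪ {elast})).Adj a b →
        f b ≤ f a + 1 := by
      intro a b hab
      rw [SimpleGraph.deleteEdges_adj] at hab
      obtain ⟨hab, hnmem⟩ := hab
      rw [Set.mem_union] at hnmem
      push_neg at hnmem
      obtain ⟨hnS, hnel⟩ := hnmem
      have hne_last : s(a, b) ≠ elast := by simpa using hnel
      rcases (A.adj_iff a b).mp hab with ⟨x, y, rfl, rfl, hxy⟩ | ⟨i, hmem⟩ | ⟨i, hmem⟩ | hmem
      · have hnE' : s(x, y) ∉ E' := fun hm => hnS ⟨s(x, y), hm, by rw [Sym2.map_pair_eq]⟩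
        have hradj : R.Adj x y := by
          rw [hR, SimpleGraph.deleteEdges_adj]
          exact ⟨hxy, hnE'⟩
        have h2 : R.Reachable s2 x ↔ R.Reachable s2 y :=
          ⟨fun h => h.trans hradj.reachable, fun h => h.trans hradj.symm.reachable⟩
        have h3 : R.Reachable s3 x ↔ R.Reachable s3 y :=
          ⟨fun h => h.trans hradj.reachable, fun h => h.trans hradj.symm.reachable⟩
        have heq : f (Sum.inl y) = f (Sum.inl x) := by
          simp only [f, Sum.elim_inl]
          by_cases hc2 : R.Reachable s2 x
          · rw [if_pos hc2, if_pos (h2.mp hc2)]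
          · rw [if_neg hc2, if_neg (fun h => hc2 (h2.mpr h))]
            by_cases hc3 : R.Reachable s3 x
            · rw [if_pos hc3, if_pos (h3.mp hc3)]
            · rw [if_neg hc3, if_neg (fun h => hc3 (h3.mpr h))]
        rw [heq]
        omega
      · obtain ⟨k, hk1, hor⟩ := FPC_edge_getVert (A.P1 i) hmem
        rw [hP1len i] at hk1
        rcases hor with ⟨ha, hb⟩ | ⟨ha, hb⟩
        · rw [← ha, ← hb, hgv1 i k (by omega), hgv1 i (k + 1) hk1]
        · rw [← ha, ← hb, hgv1 i (k + 1) hk1, hgv1 i k (by omega)]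
          omega
      · obtain ⟨k, hk1, hor⟩ := FPC_edge_getVert (A.P2 i) hmem
        rw [hP2len i] at hk1
        rcases hor with ⟨ha, hb⟩ | ⟨ha, hb⟩
        · rw [← ha, ← hb, hgv2 i k (by omega), hgv2 i (k + 1) hk1]
          omega
        · rw [← ha, ← hb, hgv2 i (k + 1) hk1, hgv2 i k (by omega)]
          omega
      · obtain ⟨k, hk1, hor⟩ := FPC_edge_getVert A.pstar hmem
        by_cases hkl : k + 1 = A.pstar.length
        · exfalso
          apply hne_last
          have hkk : k = A.pstar.length - 1 := by omega
          rcases hor with ⟨ha, hb⟩ | ⟨ha, hb⟩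
          · rw [helast, hpen, ← ha, ← hb, hkk,
              show A.pstar.length - 1 + 1 = A.pstar.length by omega, Walk.getVert_length]
          · rw [helast, hpen, ← ha, ← hb, hkk,
              show A.pstar.length - 1 + 1 = A.pstar.length by omega, Walk.getVert_length,
              Sym2.eq_swap]
        · have hkl' : k + 1 < 2 * N - 1 := by
            rw [hpl] at hk1 hkl
            omega
          rcases hor with ⟨ha, hb⟩ | ⟨ha, hb⟩
          · rw [← ha, ← hb, hgvps k (by omega), hgvps (k + 1) hkl']
          · rw [← ha, ← hb, hgvps (k + 1) hkl', hgvps k (by omega)]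
            omega
    by_cases hB : elast ∈ q.edges
    · -- q uses the last edge of pstar: q must equal pstar, contradiction
      exfalso
      have hdeg : ∀ c ∈ A.pstar.support, c ≠ Sum.inl s1 → c ≠ Sum.inl s3 →
          ∀ x, Ghat.Adj c x → s(c, x) ∈ A.pstar.edges := by
        intro c hc hc1 hc3 x hadj
        obtain ⟨w0, hw0⟩ := A.pstar_new c hc hc1 hc3
        rcases (A.adj_iff c x).mp hadj with ⟨x', y', hx', -, -⟩ | ⟨i, hmem⟩ | ⟨i, hmem⟩ | hmem
        · rw [hw0] at hx'; simp at hx'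
        · exact absurd (A.P1_pstar_disj i c (Walk.fst_mem_support_of_mem_edges _ hmem) hc) hc1
        · exact absurd (A.P2_pstar_disj i c (Walk.fst_mem_support_of_mem_edges _ hmem) hc) hc3
        · exact hmem
      set m0 := q.mapLe (SimpleGraph.deleteEdges_le (Sym2.map Sum.inl '' E')) with hm0
      have hm0path : m0.IsPath := hq.mapLe _
      have hm0edges : m0.edges = q.edges := by
        rw [hm0]
        simp only [Walk.mapLe, Walk.edges_map]
        have hid : Sym2.map ⇑(Hom.ofLE
            (SimpleGraph.deleteEdges_le (G := Ghat) (Sym2.map Sum.inl '' E'))) = id := by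
          funext e
          refine Sym2.ind (fun x y => ?_) e
          rw [Sym2.map_pair_eq]
          rfl
        rw [hid, List.map_id]
      have hmrpath : m0.reverse.IsPath := hm0path.reverse
      have hpen_mem : pen ∈ A.pstar.support :=
        Walk.mem_support_iff_exists_getVert.mpr ⟨A.pstar.length - 1, rfl, Nat.sub_le _ _⟩
      have hpen1 : pen ≠ Sum.inl s1 := by
        intro h
        have h0 : A.pstar.getVert 0 = Sum.inl s1 := Walk.getVert_zero _
        have := FPC_getVert_injOn A.pstar_isPath (A.pstar.length - 1) 0 (Nat.sub_le _ _)
          (Nat.zero_le _) ((hpen.symm.trans h).trans h0.symm)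
        rw [hpl] at this
        omega
      have hpen3 : pen ≠ Sum.inl s3 := by
        intro h
        have hL : A.pstar.getVert (A.pstar.length) = Sum.inl s3 := Walk.getVert_length _
        have := FPC_getVert_injOn A.pstar_isPath (A.pstar.length - 1) (A.pstar.length)
          (Nat.sub_le _ _) (le_refl _) ((hpen.symm.trans h).trans hL.symm)
        rw [hpl] at this
        omega
      have hB' : s(pen, Sum.inl s3) ∈ q.edges := by rw [← helast]; exact hB
      have hadjpen : Ghat.Adj pen (Sum.inl s3) := by
        have h1 := Walk.adj_of_mem_edges q hB'
        rw [SimpleGraph.deleteEdges_adj] at h1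
        exact h1.1
      have hellast : s(pen, Sum.inl s3) ∈ A.pstar.edges :=
        hdeg pen hpen_mem hpen1 hpen3 _ hadjpen
      have hB_mr : s(Sum.inl s3, pen) ∈ m0.reverse.edges := by
        rw [Walk.edges_reverse, List.mem_reverse, hm0edges, Sym2.eq_swap]
        exact hB'
      have key : m0.reverse = A.pstar.reverse := by
        apply FPC_follow A.pstar A.pstar_isPath hdeg A.pstar.reverse A.pstar_isPath.reverse
        · intro e he
          rwa [Walk.edges_reverse, List.mem_reverse] at he
        · intro x hx
          rwa [Walk.support_reverse, List.mem_reverse] at hx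
        · exact fun x _ => eq_or_ne x (Sum.inl s3)
        · exact hmrpath
        · intro z hz m' hmeq
          have hz' : pen = m0.reverse.getVert 1 := FPC_head_edge hmrpath hB_mr
          have hsndz : m0.reverse.getVert 1 = z := by
            rw [hmeq, Walk.getVert_cons_succ, Walk.getVert_zero]
          rw [← hsndz, ← hz', Sym2.eq_swap]
          exact hellast
        · exact Or.inl rfl
      apply hne
      have hkey2 := congrArg Walk.reverse key
      rwa [Walk.reverse_reverse, Walk.reverse_reverse] at hkey2
    · -- q avoids the last edge of pstar: length bound
      have htrans : ∀ e ∈ q.edges,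
          e ∈ (Ghat.deleteEdges ((Sym2.map Sum.inl '' E') ∪ {elast})).edgeSet := by
        intro e he
        have h1 := q.edges_subset_edgeSet he
        rw [SimpleGraph.edgeSet_deleteEdges] at h1 ⊢
        refine ⟨h1.1, ?_⟩
        rw [Set.mem_union]
        push_neg
        exact ⟨h1.2, fun hmem => hB (Set.mem_singleton_iff.mp hmem ▸ he)⟩
      have hbound := FPC_lip f hlip (q.transfer _ htrans)
      rw [Walk.length_transfer] at hbound
      rw [hfs3, hfs1] at hbound
      rw [hpl]
      omega
end

section
/- Let G=(V,E) be an undirected unweighted graph with three distinct terminals s1,s2,s3, and let Ĝ with target path p* be the augmented graph built from G. Then the minimum size of a Force Path Cut solution for (Ĝ,p*) is at most the minimum size of an edge set E'⊆E that disconnects s1, s2, and s3 pairwise in G. -/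
namespace SimpleGraph.Walk
variable {V : Type*} {G : SimpleGraph V}

lemma aux_support_getElem {u v : V} (p : G.Walk u v) :
    ∀ (i : ℕ) (h : i < p.support.length), p.support[i] = p.getVert i := by
  induction p with
  | nil =>
    intro i h
    simp only [support_nil, List.length_cons, List.length_nil] at h
    interval_cases i
    · simp [support_nil, getVert]
  | cons hadj p ih =>
    intro i h
    cases i with
    | zero => simp [support_cons]
    | succ n =>
      simp only [support_cons, List.getElem_cons_succ, getVert_cons_succ]
      exact ih n (by simpa [support_cons, List.length_cons] using h)

lemma aux_getVert_injOn {u v : V} {p : G.Walk u v} (hp : p.IsPath) {i j : ℕ}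
    (hi : i ≤ p.length) (hj : j ≤ p.length) (h : p.getVert i = p.getVert j) : i = j := by
  have hi' : i < p.support.length := by rw [length_support]; omega
  have hj' : j < p.support.length := by rw [length_support]; omega
  have : p.support[i] = p.support[j] := by
    rw [aux_support_getElem p i hi', aux_support_getElem p j hj', h]
  exact (hp.support_nodup.getElem_inj_iff).1 this

lemma aux_mem_edges {u v : V} {p : G.Walk u v} {e : Sym2 V} (he : e ∈ p.edges) :
    ∃ k, k < p.length ∧ e = s(p.getVert k, p.getVert (k + 1)) := by
  induction p with
  | nil => simp [edges_nil] at he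
  | cons hadj p ih =>
    rw [edges_cons, List.mem_cons] at he
    rcases he with he | he
    · refine ⟨0, by simp [length_cons], ?_⟩
      rw [he, getVert_zero, getVert_cons_succ, getVert_zero]
    · obtain ⟨k, hk, hke⟩ := ih he
      exact ⟨k + 1, by simp only [length_cons]; omega, by
        rwa [getVert_cons_succ, getVert_cons_succ]⟩

lemma aux_indexOf [DecidableEq V] {u v : V} {p : G.Walk u v} (hp : p.IsPath) {k : ℕ}
    (hk : k ≤ p.length) : p.support.idxOf (p.getVert k) = k := by
  have hk' : k < p.support.length := by rw [length_support]; omega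
  rw [← aux_support_getElem p k hk']
  exact hp.support_nodup.idxOf_getElem k hk'

lemma aux_walk_ext {u v : V} (p q : G.Walk u v) (hl : p.length = q.length)
    (h : ∀ k, p.getVert k = q.getVert k) : p = q := by
  induction p with
  | nil =>
    cases q with
    | nil => rfl
    | cons h q => simp [length_cons] at hl
  | cons hadj p ih =>
    cases q with
    | nil => simp [length_cons] at hl
    | cons hadj' q =>
      have h1 := h 1
      simp only [getVert_cons _ _ one_ne_zero, Nat.sub_self, getVert_zero] at h1
      subst h1
      have := ih q (by simpa [length_cons] using hl)
        (fun k => by have := h (k + 1); rwa [getVert_cons_succ, getVert_cons_succ] at this)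
      rw [this]

lemma aux_getVert_map {V' : Type*} {G' : SimpleGraph V'} (f : G →g G') {u v : V}
    (p : G.Walk u v) (i : ℕ) : (p.map f).getVert i = f (p.getVert i) := by
  induction p generalizing i with
  | nil => simp [getVert]
  | cons hadj p ih =>
    cases i with
    | zero => simp
    | succ n => rw [map_cons, getVert_cons_succ, getVert_cons_succ]; exact ih n

lemma aux_length_bound {u v : V} (f : V → ℕ) (p : G.Walk u v)
    (h : ∀ d ∈ p.darts, f d.toProd.2 ≤ f d.toProd.1 + 1) : f v ≤ f u + p.length := by
  induction p with
  | nil => simp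
  | cons hadj p ih =>
    rename_i a b c
    have h1 : f b ≤ f a + 1 := h ⟨(a, b), hadj⟩ (by simp [darts_cons])
    have h2 := ih (fun d hd => h d (by simp [darts_cons, hd]))
    simp only [length_cons]
    omega

lemma aux_endpoint_edge {u v : V} {p : G.Walk u v} (hp : p.IsPath)
    (he : s(u, v) ∈ p.edges) : p.length = 1 := by
  obtain ⟨k, hk, heq⟩ := aux_mem_edges he
  rcases Sym2.eq_iff.1 heq with ⟨h1, h2⟩ | ⟨h1, h2⟩
  · have hk0 : k = 0 := by
      refine (aux_getVert_injOn hp (by omega) (by omega) ?_).symm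
      rw [← h1, getVert_zero]
    have : k + 1 = p.length := by
      refine aux_getVert_injOn hp (by omega) le_rfl ?_
      rw [← h2, getVert_length]
    omega
  · have : (0 : ℕ) = k + 1 := by
      refine aux_getVert_injOn hp (by omega) (by omega) ?_
      rw [← h1, getVert_zero]
    omega

end SimpleGraph.Walk

open SimpleGraph Walk

/-- The minimum size of a Force Path Cut solution for `(Ĝ, p*)` is at
most the minimum size of an edge set `E' ⊆ E` disconnecting the terminals pairwise
in `G` (assuming some disconnecting edge set exists). -/
theorem stmt2 {V W : Type*} [Fintype V] [DecidableEq V]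
    (G : SimpleGraph V) [DecidableRel G.Adj] (s1 s2 s3 : V)
    (h12 : s1 ≠ s2) (h13 : s1 ≠ s3) (h23 : s2 ≠ s3)
    (Ghat : SimpleGraph (V ⊕ W))
    (A : AugSpec G s1 s2 s3 (Fintype.card V) G.edgeFinset.card Ghat)
    (hex : ∃ E' : Set (Sym2 V), E' ⊆ G.edgeSet ∧ Disconnects G E' s1 s2 s3) :
    sInf {n : ℕ | ∃ Ehat : Set (Sym2 (V ⊕ W)), FPCSol Ghat A.pstar Ehat ∧ Ehat.ncard = n}
      ≤ sInf {n : ℕ | ∃ E' : Set (Sym2 V),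
          E' ⊆ G.edgeSet ∧ Disconnects G E' s1 s2 s3 ∧ E'.ncard = n} := by
  classical
  obtain ⟨N, hNdef⟩ : ∃ n : ℕ, n = Fintype.card V := ⟨_, rfl⟩
  have hN3 : 3 ≤ N := by
    rw [hNdef]
    have hc : ({s1, s2, s3} : Finset V).card = 3 := by
      rw [Finset.card_insert_of_notMem (by simp [h12, h13]),
        Finset.card_insert_of_notMem (by simp [h23]), Finset.card_singleton]
    calc 3 = ({s1, s2, s3} : Finset V).card := hc.symm
      _ ≤ Fintype.card V := Finset.card_le_univ _
  have hne : {n : ℕ | ∃ E' : Set (Sym2 V),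
      E' ⊆ G.edgeSet ∧ Disconnects G E' s1 s2 s3 ∧ E'.ncard = n}.Nonempty := by
    obtain ⟨E0, hE0a, hE0b⟩ := hex
    exact ⟨E0.ncard, E0, hE0a, hE0b, rfl⟩
  obtain ⟨E', hEsub, hdisc, hEcard⟩ := Nat.sInf_mem hne
  set Ehat : Set (Sym2 (V ⊕ W)) := Sym2.map (Sum.inl : V → V ⊕ W) '' E' with hEhatdef
  -- pstar length
  have hLval : A.pstar.length = 2 * N - 1 := by rw [hNdef]; exact A.pstar_length
  have hFPC : FPCSol Ghat A.pstar Ehat := by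
    refine ⟨?_, ?_, ?_⟩
    · -- Ehat ⊆ edgeSet
      rintro e ⟨e0, he0, rfl⟩
      induction e0 using Sym2.ind with
      | _ u v =>
        have hadj : G.Adj u v := hEsub he0
        rw [Sym2.map_pair_eq, SimpleGraph.mem_edgeSet]
        exact (A.adj_iff _ _).2 (Or.inl ⟨u, v, rfl, rfl, hadj⟩)
    · -- avoids pstar edges
      intro e he hmem
      obtain ⟨e0, he0, rfl⟩ := hmem
      revert he
      induction e0 using Sym2.ind with
      | _ u v =>
        intro he
        rw [Sym2.map_pair_eq] at he
        have hadjuv : G.Adj u v := hEsub he0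
        have hu := A.pstar.fst_mem_support_of_mem_edges he
        have hv := A.pstar.snd_mem_support_of_mem_edges he
        have hu' : u = s1 ∨ u = s3 := by
          by_contra hcon
          push_neg at hcon
          obtain ⟨x, hx⟩ := A.pstar_new _ hu (by simp [hcon.1]) (by simp [hcon.2])
          simp at hx
        have hv' : v = s1 ∨ v = s3 := by
          by_contra hcon
          push_neg at hcon
          obtain ⟨x, hx⟩ := A.pstar_new _ hv (by simp [hcon.1]) (by simp [hcon.2])
          simp at hx
        have hlen1 : A.pstar.length = 1 := by
          rcases hu' with rfl | rfl <;> rcases hv' with rfl | rfl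
          · exact absurd rfl hadjuv.ne
          · exact Walk.aux_endpoint_edge A.pstar_isPath he
          · exact Walk.aux_endpoint_edge A.pstar_isPath (by rwa [Sym2.eq_swap] at he)
          · exact absurd rfl hadjuv.ne
        omega
    · -- main condition
      intro q hq hqne
      set L := A.pstar.length with hLdef
      have hL2 : 2 ≤ L := by omega
      have hpg0 : A.pstar.getVert 0 = Sum.inl s1 := Walk.getVert_zero _
      have hpgL : A.pstar.getVert L = Sum.inl s3 := Walk.getVert_length _
      have pinj : ∀ {i j : ℕ}, i ≤ L → j ≤ L → A.pstar.getVert i = A.pstar.getVert j → i = j :=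
        fun hi hj h => Walk.aux_getVert_injOn A.pstar_isPath hi hj h
      have qinj : ∀ {i j : ℕ}, i ≤ q.length → j ≤ q.length →
          q.getVert i = q.getVert j → i = j :=
        fun hi hj h => Walk.aux_getVert_injOn hq hi hj h
      have hadjGhat : ∀ {x y : V ⊕ W}, (Ghat.deleteEdges Ehat).Adj x y →
          Ghat.Adj x y ∧ s(x, y) ∉ Ehat := by
        intro x y h
        rwa [SimpleGraph.deleteEdges_adj] at h
      have hint : ∀ m, 1 ≤ m → m + 1 ≤ L → ∀ y, Ghat.Adj (A.pstar.getVert m) y →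
          s(A.pstar.getVert m, y) ∈ A.pstar.edges := by
        intro m hm1 hm2 y hadj
        have hmem : A.pstar.getVert m ∈ A.pstar.support :=
          Walk.mem_support_iff_exists_getVert.2 ⟨m, rfl, by omega⟩
        have hne1 : A.pstar.getVert m ≠ Sum.inl s1 := by
          intro h
          have : m = 0 := pinj (by omega) (by omega) (by rw [h, hpg0])
          omega
        have hne3 : A.pstar.getVert m ≠ Sum.inl s3 := by
          intro h
          have : m = L := pinj (by omega) le_rfl (by rw [h, hpgL])
          omega
        obtain ⟨x, hx⟩ := A.pstar_new _ hmem hne1 hne3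
        rcases (A.adj_iff _ y).1 hadj with ⟨u', v', h1, h2, h3⟩ | ⟨i, hi⟩ | ⟨i, hi⟩ | h
        · rw [hx] at h1; simp at h1
        · have := A.P1_pstar_disj i _ ((A.P1 i).fst_mem_support_of_mem_edges hi) hmem
          rw [hx] at this; simp at this
        · have := A.P2_pstar_disj i _ ((A.P2 i).fst_mem_support_of_mem_edges hi) hmem
          rw [hx] at this; simp at this
        · exact h
      have hnb : ∀ m, m ≤ L → ∀ y, s(A.pstar.getVert m, y) ∈ A.pstar.edges →
          y = A.pstar.getVert (m - 1) ∨ y = A.pstar.getVert (m + 1) := by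
        intro m hm y he
        obtain ⟨k, hk, heq⟩ := Walk.aux_mem_edges he
        rcases Sym2.eq_iff.1 heq with ⟨h1, h2⟩ | ⟨h1, h2⟩
        · have hmk : m = k := pinj hm (by omega) h1
          right; rw [h2, hmk]
        · have hmk : m = k + 1 := pinj hm (by omega) h1
          left; rw [h2]; congr 1; omega
      by_cases hcase : ∀ e ∈ q.edges, e ∉ A.pstar.edges
      · -- Case B : q avoids pstar edges; potential function argument
        letI instDE : DecidableEq (V ⊕ W) := Classical.decEq _
        letI instB : BEq (V ⊕ W) := instBEqOfDecidableEq
        set f : V ⊕ W → ℕ := Sum.elim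
          (fun u => if (G.deleteEdges E').Reachable s1 u then 0
            else if (G.deleteEdges E').Reachable s3 u then 2 * N else N)
          (fun w => @dite ℕ (∃ i, (Sum.inr w : V ⊕ W) ∈ (A.P1 i).support)
            (Classical.propDecidable _)
            (fun h => (A.P1 h.choose).support.idxOf (Sum.inr w))
            (fun _ => @dite ℕ (∃ i, (Sum.inr w : V ⊕ W) ∈ (A.P2 i).support)
              (Classical.propDecidable _)
              (fun h2 => N + (A.P2 h2.choose).support.idxOf (Sum.inr w))
              (fun _ => 0))) with hfdef
        have hfs1 : f (Sum.inl s1) = 0 := by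
          rw [hfdef, Sum.elim_inl, if_pos (SimpleGraph.Reachable.refl s1)]
        have hfs2 : f (Sum.inl s2) = N := by
          rw [hfdef, Sum.elim_inl, if_neg hdisc.1, if_neg (fun h => hdisc.2.2 h.symm)]
        have hfs3 : f (Sum.inl s3) = 2 * N := by
          rw [hfdef, Sum.elim_inl, if_neg hdisc.2.1, if_pos (SimpleGraph.Reachable.refl s3)]
        have hf1 : ∀ (i) (k : ℕ), k ≤ N → f ((A.P1 i).getVert k) = k := by
          intro i k hk
          have hlen : (A.P1 i).length = N := by rw [hNdef]; exact A.P1_length i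
          have hgvN : (A.P1 i).getVert N = Sum.inl s2 := by
            have h3 := Walk.getVert_length (A.P1 i)
            rwa [hlen] at h3
          rcases Nat.eq_zero_or_pos k with rfl | hk0
          · rw [Walk.getVert_zero, hfs1]
          rcases eq_or_lt_of_le hk with hEq | hkN
          · rw [hEq, hgvN, hfs2]
          · have hmem : (A.P1 i).getVert k ∈ (A.P1 i).support :=
              Walk.mem_support_iff_exists_getVert.2 ⟨k, rfl, by omega⟩
            have hne1 : (A.P1 i).getVert k ≠ Sum.inl s1 := by
              intro h
              have : k = 0 := Walk.aux_getVert_injOn (A.P1_isPath i) (by omega) (by omega)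
                (by rw [h, Walk.getVert_zero])
              omega
            have hne2 : (A.P1 i).getVert k ≠ Sum.inl s2 := by
              intro h
              have : k = N := Walk.aux_getVert_injOn (A.P1_isPath i) (by omega) (by omega)
                (by rw [h, hgvN])
              omega
            obtain ⟨x, hx⟩ := A.P1_new i _ hmem hne1 hne2
            have hmem' : (Sum.inr x : V ⊕ W) ∈ (A.P1 i).support := hx ▸ hmem
            have hex1 : ∃ j, (Sum.inr x : V ⊕ W) ∈ (A.P1 j).support := ⟨i, hmem'⟩
            have hch : hex1.choose = i := by
              by_contra hneq
              rcases A.P1_disj _ i hneq _ hex1.choose_spec hmem' with h | h <;> simp at h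
            have hidx := Walk.aux_indexOf (A.P1_isPath i)
              (show k ≤ (A.P1 i).length by omega)
            rw [hx, hfdef, Sum.elim_inr, dif_pos hex1, hch, ← hx]
            exact hidx
        have hf2 : ∀ (i) (k : ℕ), k ≤ N → f ((A.P2 i).getVert k) = N + k := by
          intro i k hk
          have hlen : (A.P2 i).length = N := by rw [hNdef]; exact A.P2_length i
          have hgvN : (A.P2 i).getVert N = Sum.inl s3 := by
            have h3 := Walk.getVert_length (A.P2 i)
            rwa [hlen] at h3
          rcases Nat.eq_zero_or_pos k with rfl | hk0
          · rw [Walk.getVert_zero, hfs2]; omega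
          rcases eq_or_lt_of_le hk with hEq | hkN
          · rw [hEq, hgvN, hfs3]; omega
          · have hmem : (A.P2 i).getVert k ∈ (A.P2 i).support :=
              Walk.mem_support_iff_exists_getVert.2 ⟨k, rfl, by omega⟩
            have hne1 : (A.P2 i).getVert k ≠ Sum.inl s2 := by
              intro h
              have : k = 0 := Walk.aux_getVert_injOn (A.P2_isPath i) (by omega) (by omega)
                (by rw [h, Walk.getVert_zero])
              omega
            have hne2 : (A.P2 i).getVert k ≠ Sum.inl s3 := by
              intro h
              have : k = N := Walk.aux_getVert_injOn (A.P2_isPath i) (by omega) (by omega)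
                (by rw [h, hgvN])
              omega
            obtain ⟨x, hx⟩ := A.P2_new i _ hmem hne1 hne2
            have hmem' : (Sum.inr x : V ⊕ W) ∈ (A.P2 i).support := hx ▸ hmem
            have hnoP1 : ¬ ∃ j, (Sum.inr x : V ⊕ W) ∈ (A.P1 j).support := by
              rintro ⟨j, hj⟩
              have := A.P1_P2_disj j i _ hj hmem'
              simp at this
            have hex2 : ∃ j, (Sum.inr x : V ⊕ W) ∈ (A.P2 j).support := ⟨i, hmem'⟩
            have hch : hex2.choose = i := by
              by_contra hneq
              rcases A.P2_disj _ i hneq _ hex2.choose_spec hmem' with h | h <;> simp at h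
            have hidx := Walk.aux_indexOf (A.P2_isPath i)
              (show k ≤ (A.P2 i).length by omega)
            rw [hx, hfdef, Sum.elim_inr, dif_neg hnoP1, dif_pos hex2, hch, ← hx]
            rw [hidx]
        have hstep : ∀ d ∈ q.darts, f d.toProd.2 ≤ f d.toProd.1 + 1 := by
          intro d hd
          obtain ⟨hGadj, hnotE⟩ := hadjGhat d.adj
          have hedge : s(d.toProd.1, d.toProd.2) ∈ q.edges :=
            List.mem_map_of_mem (f := Dart.edge) hd
          have hnotp : s(d.toProd.1, d.toProd.2) ∉ A.pstar.edges := hcase _ hedge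
          rcases (A.adj_iff _ _).1 hGadj with ⟨u, v', hxu, hyv, hGuv⟩ | ⟨i, hi⟩ | ⟨i, hi⟩ | h
          · have hnotE' : s(u, v') ∉ E' := by
              intro hmem
              exact hnotE (by
                rw [hxu, hyv]
                exact ⟨s(u, v'), hmem, by rw [Sym2.map_pair_eq]⟩)
            have hGadj' : (G.deleteEdges E').Adj u v' :=
              SimpleGraph.deleteEdges_adj.2 ⟨hGuv, hnotE'⟩
            have he1 : (G.deleteEdges E').Reachable s1 u ↔ (G.deleteEdges E').Reachable s1 v' :=
              ⟨fun r => r.trans hGadj'.reachable, fun r => r.trans hGadj'.symm.reachable⟩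
            have he3 : (G.deleteEdges E').Reachable s3 u ↔ (G.deleteEdges E').Reachable s3 v' :=
              ⟨fun r => r.trans hGadj'.reachable, fun r => r.trans hGadj'.symm.reachable⟩
            have hfeq : f d.toProd.1 = f d.toProd.2 := by
              rw [hxu, hyv, hfdef, Sum.elim_inl, Sum.elim_inl]
              by_cases h1 : (G.deleteEdges E').Reachable s1 u
              · rw [if_pos h1, if_pos (he1.1 h1)]
              · rw [if_neg h1, if_neg (fun r => h1 (he1.2 r))]
                by_cases h3 : (G.deleteEdges E').Reachable s3 u
                · rw [if_pos h3, if_pos (he3.1 h3)]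
                · rw [if_neg h3, if_neg (fun r => h3 (he3.2 r))]
            omega
          · obtain ⟨k, hk, heq⟩ := Walk.aux_mem_edges hi
            rw [A.P1_length i] at hk
            rcases Sym2.eq_iff.1 heq with ⟨h1, h2⟩ | ⟨h1, h2⟩
            · rw [h1, h2, hf1 i k (by omega), hf1 i (k + 1) (by omega)]
            · rw [h1, h2, hf1 i k (by omega), hf1 i (k + 1) (by omega)]; omega
          · obtain ⟨k, hk, heq⟩ := Walk.aux_mem_edges hi
            rw [A.P2_length i] at hk
            rcases Sym2.eq_iff.1 heq with ⟨h1, h2⟩ | ⟨h1, h2⟩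
            · rw [h1, h2, hf2 i k (by omega), hf2 i (k + 1) (by omega)]; omega
            · rw [h1, h2, hf2 i k (by omega), hf2 i (k + 1) (by omega)]; omega
          · exact absurd h hnotp
        have hb := Walk.aux_length_bound f q hstep
        rw [hfs1, hfs3] at hb
        omega
      · -- Case A : q uses a pstar edge, hence q = pstar; contradiction
        exfalso
        apply hqne
        push_neg at hcase
        obtain ⟨e, heq, hep⟩ := hcase
        obtain ⟨k, hkL, hke⟩ := Walk.aux_mem_edges hep
        rw [hke] at heq
        have hx_mem : ∃ m, 1 ≤ m ∧ m + 1 ≤ L ∧ A.pstar.getVert m ∈ q.support := by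
          rcases Nat.eq_zero_or_pos k with rfl | hk0
          · exact ⟨1, le_rfl, by omega, q.snd_mem_support_of_mem_edges heq⟩
          · exact ⟨k, hk0, by omega, q.fst_mem_support_of_mem_edges heq⟩
        have hPj : ∃ j, j ≤ q.length ∧ ∃ m, 1 ≤ m ∧ m + 1 ≤ L ∧
            q.getVert j = A.pstar.getVert m := by
          obtain ⟨m, hm1, hm2, hmem⟩ := hx_mem
          obtain ⟨j, hj1, hj2⟩ := Walk.mem_support_iff_exists_getVert.1 hmem
          exact ⟨j, hj2, m, hm1, hm2, hj1⟩
        have hone : q.getVert 1 = A.pstar.getVert 1 ∧ 1 ≤ q.length := by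
          obtain ⟨hj0len, m0, hm01, hm0L, hj0eq⟩ := Nat.find_spec hPj
          set j0 := Nat.find hPj with hj0def
          have hj0pos : 0 < j0 := by
            rcases Nat.eq_zero_or_pos j0 with h0 | h
            · exfalso
              rw [h0, Walk.getVert_zero] at hj0eq
              have : (0 : ℕ) = m0 := pinj (by omega) (by omega) (by rw [hpg0, ← hj0eq])
              omega
            · exact h
          have hadj := q.adj_getVert_succ (show j0 - 1 < q.length by omega)
          have hj0' : j0 - 1 + 1 = j0 := by omega
          rw [hj0'] at hadj
          have hGadj : Ghat.Adj (A.pstar.getVert m0) (q.getVert (j0 - 1)) := by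
            rw [← hj0eq]
            exact ((hadjGhat hadj).1).symm
          have hpe := hint m0 hm01 hm0L _ hGadj
          rcases hnb m0 (by omega) _ hpe with hy | hy
          · rcases Nat.lt_or_ge 1 m0 with hm2 | hm2
            · exfalso
              refine Nat.find_min hPj (show j0 - 1 < j0 by omega) ⟨by omega, m0 - 1, by omega,
                by omega, hy⟩
            · have hm0 : m0 = 1 := by omega
              have hq0 : q.getVert (j0 - 1) = q.getVert 0 := by
                rw [hy, hm0, Walk.getVert_zero]
                simp [hpg0]
              have hj01 : j0 - 1 = 0 := qinj (by omega) (by omega) hq0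
              have hj1 : j0 = 1 := by omega
              rw [hj1, hm0] at hj0eq
              exact ⟨hj0eq, by omega⟩
          · rcases Nat.lt_or_ge (m0 + 1 + 1) (L + 1) with hmL | hmL
            · exfalso
              refine Nat.find_min hPj (show j0 - 1 < j0 by omega) ⟨by omega, m0 + 1, by omega,
                by omega, hy⟩
            · exfalso
              have hm0L' : m0 + 1 = L := by omega
              have hq0 : q.getVert (j0 - 1) = q.getVert q.length := by
                rw [hy, hm0L', hpgL, Walk.getVert_length]
              have := qinj (by omega) le_rfl hq0
              omega
        have key : ∀ m, m ≤ L → m ≤ q.length ∧ q.getVert m = A.pstar.getVert m := by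
          intro m
          induction m using Nat.strong_induction_on with
          | _ m ih =>
            intro hmL
            rcases m with _ | m
            · exact ⟨Nat.zero_le _, by rw [Walk.getVert_zero, hpg0]⟩
            rcases m with _ | m'
            · exact ⟨hone.2, hone.1⟩
            obtain ⟨hq1, he1⟩ := ih (m' + 1) (by omega) (by omega)
            obtain ⟨hq0, he0⟩ := ih m' (by omega) (by omega)
            have hlt : m' + 1 < q.length := by
              rcases eq_or_lt_of_le hq1 with heq' | h
              · exfalso
                have h3 : A.pstar.getVert (m' + 1) = A.pstar.getVert L := by
                  rw [← he1, heq', Walk.getVert_length, hpgL]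
                have := pinj (by omega) le_rfl h3
                omega
              · exact h
            have hadj := q.adj_getVert_succ hlt
            have hGadj : Ghat.Adj (A.pstar.getVert (m' + 1)) (q.getVert (m' + 2)) := by
              rw [← he1]
              exact (hadjGhat hadj).1
            have hpe := hint (m' + 1) (by omega) (by omega) _ hGadj
            rcases hnb (m' + 1) (by omega) _ hpe with hy | hy
            · exfalso
              have hq2 : q.getVert (m' + 2) = q.getVert m' := by
                rw [hy, Nat.add_sub_cancel, ← he0]
              have := qinj (by omega) (by omega) hq2
              omega
            · exact ⟨by omega, by rw [hy]⟩
        have hfin := key L le_rfl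
        have hlenq : q.length = L := by
          have h3 : q.getVert L = q.getVert q.length := by
            rw [hfin.2, hpgL, Walk.getVert_length]
          have := qinj hfin.1 le_rfl h3
          omega
        apply Walk.aux_walk_ext
        · rw [Walk.length_map, hlenq]
        · intro k'
          rw [Walk.aux_getVert_map, Hom.ofLE_apply]
          rcases le_or_gt k' L with hk' | hk'
          · exact (key k' hk').2
          · rw [Walk.getVert_of_length_le q (by omega), Walk.getVert_of_length_le A.pstar (by omega)]
  refine le_trans (Nat.sInf_le ⟨Ehat, hFPC, rfl⟩) ?_
  rw [← hEcard]
  exact Set.ncard_image_le (Set.toFinite E')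
end

section
/- Let G=(V,E) be an undirected unweighted graph with three distinct terminals s1,s2,s3, and let Ĝ with target path p* be the augmented graph built from G. If Ê'⊆Ê is a Force Path Cut solution for (Ĝ,p*) such that Ê'∩E does not disconnect s1, s2, and s3 pairwise in G, then Ê' contains at least M+1 edges that are not in E (hence |Ê'| ≥ M+1). -/
lemma walk_edge_ends {X : Type*} {G : SimpleGraph X} {u v : X} (p : G.Walk u v)
    (hp : p.IsPath) (he : s(u, v) ∈ p.edges) : p.length = 1 := by
  cases p with
  | nil => simp at he
  | @cons _ w _ h q =>
    rw [SimpleGraph.Walk.edges_cons, List.mem_cons] at he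
    rw [SimpleGraph.Walk.cons_isPath_iff] at hp
    rcases he with he | he
    · rw [Sym2.eq_iff] at he
      rcases he with ⟨-, rfl⟩ | ⟨rfl, rfl⟩
      · rw [(SimpleGraph.Walk.isPath_iff_eq_nil (p := q)).mp hp.1]
        simp
      · exact absurd h (G.irrefl)
    · exact absurd (q.fst_mem_support_of_mem_edges he) hp.2

lemma exists_mid {X : Type*} {G : SimpleGraph X} {a b : X} (p : G.Walk a b)
    (hp : p.IsPath) (hlen : 2 ≤ p.length) : ∃ v ∈ p.support, v ≠ a ∧ v ≠ b := by
  cases p with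
  | nil => simp at hlen
  | @cons _ w _ h q =>
    rw [SimpleGraph.Walk.cons_isPath_iff] at hp
    refine ⟨w, by simp, ?_, ?_⟩
    · rintro rfl; exact hp.2 q.start_mem_support
    · rintro rfl
      rw [(SimpleGraph.Walk.isPath_iff_eq_nil (p := q)).mp hp.1] at hlen
      simp at hlen

lemma mem_support_of_mem_edges' {X : Type*} {G : SimpleGraph X} {u v : X} {p : G.Walk u v}
    {e : Sym2 X} (he : e ∈ p.edges) {a : X} (ha : a ∈ e) : a ∈ p.support := by
  induction e using Sym2.ind with
  | _ b c =>
    rcases Sym2.mem_iff.mp ha with rfl | rfl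
    · exact p.fst_mem_support_of_mem_edges he
    · exact p.snd_mem_support_of_mem_edges he

lemma count_aux {V W : Type*} {Ghat : SimpleGraph (V ⊕ W)} {a b : V} {M N : ℕ}
    (hN : 3 ≤ N) (Q : Fin (M + 1) → Ghat.Walk (Sum.inl a) (Sum.inl b))
    (hpath : ∀ i, (Q i).IsPath) (hlen : ∀ i, (Q i).length = N)
    (hnew : ∀ i, ∀ v ∈ (Q i).support, v ≠ Sum.inl a → v ≠ Sum.inl b → ∃ x : W, v = Sum.inr x)
    (hdisj : ∀ i j, i ≠ j → ∀ v ∈ (Q i).support, v ∈ (Q j).support →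
      v = Sum.inl a ∨ v = Sum.inl b)
    (Ehat : Set (Sym2 (V ⊕ W))) (hcut : ∀ i, ∃ e ∈ (Q i).edges, e ∈ Ehat) :
    ∃ F : Finset (Sym2 (V ⊕ W)), F.card = M + 1 ∧ (↑F : Set (Sym2 (V ⊕ W))) ⊆ Ehat ∧
      ∀ ed ∈ F, ∃ y : W, Sum.inr y ∈ ed := by
  classical
  choose e he1 he2 using hcut
  have hinr : ∀ i, ∀ ed ∈ (Q i).edges, ∃ y : W, Sum.inr y ∈ ed := by
    intro i ed hed
    have hedge : ed ∈ Ghat.edgeSet := (Q i).edges_subset_edgeSet hed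
    revert hedge
    induction ed using Sym2.ind with
    | _ x y =>
      intro hedge
      have hxy : x ≠ y := (Ghat.mem_edgeSet.mp hedge).ne
      rcases x with x | x
      · rcases y with y | y
        · exfalso
          have hx := hnew i (Sum.inl x) ((Q i).fst_mem_support_of_mem_edges hed)
          have hy := hnew i (Sum.inl y) ((Q i).snd_mem_support_of_mem_edges hed)
          have hx' : x = a ∨ x = b := by
            by_contra hc
            push_neg at hc
            obtain ⟨z, hz⟩ := hx (fun h => hc.1 (Sum.inl.inj h)) (fun h => hc.2 (Sum.inl.inj h))
            simp at hz
          have hy' : y = a ∨ y = b := by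
            by_contra hc
            push_neg at hc
            obtain ⟨z, hz⟩ := hy (fun h => hc.1 (Sum.inl.inj h)) (fun h => hc.2 (Sum.inl.inj h))
            simp at hz
          rcases hx' with rfl | rfl <;> rcases hy' with rfl | rfl
          · exact hxy rfl
          · have := walk_edge_ends (Q i) (hpath i) hed
            rw [hlen i] at this; omega
          · rw [Sym2.eq_swap] at hed
            have := walk_edge_ends (Q i) (hpath i) hed
            rw [hlen i] at this; omega
          · exact hxy rfl
        · exact ⟨y, Sym2.mem_mk_right _ _⟩
      · exact ⟨x, Sym2.mem_mk_left _ _⟩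
  have einj : Function.Injective e := by
    intro i j hij
    by_contra hne
    obtain ⟨y, hy⟩ := hinr i _ (he1 i)
    have hyi : Sum.inr y ∈ (Q i).support := mem_support_of_mem_edges' (he1 i) hy
    have hyj : Sum.inr y ∈ (Q j).support :=
      mem_support_of_mem_edges' (he1 j) (hij ▸ hy)
    rcases hdisj i j hne _ hyi hyj with h | h <;> simp at h
  refine ⟨Finset.image e Finset.univ, ?_, ?_, ?_⟩
  · rw [Finset.card_image_of_injective _ einj, Finset.card_univ, Fintype.card_fin]
  · intro ed hed
    simp only [Finset.coe_image, Finset.coe_univ, Set.image_univ, Set.mem_range] at hed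
    obtain ⟨i, rfl⟩ := hed
    exact he2 i
  · intro ed hed
    simp only [Finset.mem_image, Finset.mem_univ, true_and] at hed
    obtain ⟨i, rfl⟩ := hed
    exact hinr i _ (he1 i)

/-- If `Ê'` is a Force Path Cut solution for `(Ĝ, p*)` such that
`Ê' ∩ E` does not disconnect the three terminals pairwise in `G`, then `Ê'` contains
at least `M + 1` edges not in `E` (hence `|Ê'| ≥ M + 1`). -/
theorem stmt3 {V W : Type*} [Fintype V] [DecidableEq V]
    (G : SimpleGraph V) [DecidableRel G.Adj] (s1 s2 s3 : V)
    (h12 : s1 ≠ s2) (h13 : s1 ≠ s3) (h23 : s2 ≠ s3)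
    (Ghat : SimpleGraph (V ⊕ W))
    (A : AugSpec G s1 s2 s3 (Fintype.card V) G.edgeFinset.card Ghat)
    (Ehat : Set (Sym2 (V ⊕ W))) (hsol : FPCSol Ghat A.pstar Ehat)
    (hnodisc : ¬ Disconnects G {e | e ∈ G.edgeSet ∧ Sym2.map Sum.inl e ∈ Ehat} s1 s2 s3) :
    G.edgeFinset.card + 1 ≤ (Ehat \ (Sym2.map Sum.inl '' G.edgeSet)).ncard ∧
      G.edgeFinset.card + 1 ≤ Ehat.ncard := by
  classical
  have hN3 : 3 ≤ Fintype.card V := Fintype.two_lt_card_iff.mpr ⟨s1, s2, s3, h12, h13, h23⟩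
  set E'' : Set (Sym2 V) := {e | e ∈ G.edgeSet ∧ Sym2.map Sum.inl e ∈ Ehat} with hE''
  -- finiteness of Ehat
  have hEfin : Ehat.Finite := by
    have hsub : Ehat ⊆ (Sym2.map Sum.inl '' G.edgeSet) ∪
        ((⋃ i, {e | e ∈ (A.P1 i).edges}) ∪ ((⋃ i, {e | e ∈ (A.P2 i).edges}) ∪
          {e | e ∈ A.pstar.edges})) := by
      intro ed hed
      have hedge : ed ∈ Ghat.edgeSet := hsol.1 hed
      clear hed
      revert hedge
      induction ed using Sym2.ind with
      | _ a b =>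
        intro hedge
        rcases (A.adj_iff a b).mp (Ghat.mem_edgeSet.mp hedge) with
          ⟨u, v', rfl, rfl, huv⟩ | ⟨i, hi⟩ | ⟨i, hi⟩ | hi
        · exact Or.inl ⟨s(u, v'), huv, Sym2.map_pair_eq _ _ _⟩
        · exact Or.inr (Or.inl (Set.mem_iUnion.mpr ⟨i, hi⟩))
        · exact Or.inr (Or.inr (Or.inl (Set.mem_iUnion.mpr ⟨i, hi⟩)))
        · exact Or.inr (Or.inr (Or.inr hi))
    refine Set.Finite.subset ?_ hsub
    refine Set.Finite.union (Set.Finite.image _ (Set.toFinite _)) ?_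
    refine Set.Finite.union (Set.finite_iUnion fun i => List.finite_toSet _) ?_
    exact Set.Finite.union (Set.finite_iUnion fun i => List.finite_toSet _)
      (List.finite_toSet _)
  -- the middle vertex of pstar
  obtain ⟨v, hvsup, hv1, hv3⟩ := exists_mid A.pstar A.pstar_isPath
    (by rw [A.pstar_length]; omega)
  obtain ⟨x, rfl⟩ := A.pstar_new v hvsup hv1 hv3
  -- key contradiction machine
  have key : ∀ w : (Ghat.deleteEdges Ehat).Walk (Sum.inl s1) (Sum.inl s3),
      w.length ≤ 2 * Fintype.card V - 1 → Sum.inr x ∉ w.support → False := by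
    intro w hwl hvw
    have hne : w.bypass.mapLe (SimpleGraph.deleteEdges_le Ehat) ≠ A.pstar := by
      intro heq
      apply hvw
      apply w.support_bypass_subset
      have hsup : (w.bypass.mapLe (SimpleGraph.deleteEdges_le Ehat)).support
          = w.bypass.support := by
        have hid : ⇑(SimpleGraph.Hom.ofLE
            (SimpleGraph.deleteEdges_le (G := Ghat) Ehat)) = id := rfl
        rw [SimpleGraph.Walk.mapLe, SimpleGraph.Walk.support_map, hid, List.map_id]
      rw [heq] at hsup
      rw [← hsup]
      exact hvsup
    have hlt := hsol.2.2 w.bypass w.bypass_isPath hne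
    have hle := w.length_bypass_le
    rw [A.pstar_length] at hlt
    omega
  -- the homomorphism from G minus E'' into Ghat minus Ehat
  let f : G.deleteEdges E'' →g Ghat.deleteEdges Ehat :=
    ⟨Sum.inl, by
      intro a b hab
      rw [SimpleGraph.deleteEdges_adj] at hab ⊢
      refine ⟨(A.adj_iff _ _).mpr (Or.inl ⟨a, b, rfl, rfl, hab.1⟩), fun hmem => hab.2 ?_⟩
      exact ⟨hab.1, by rwa [Sym2.map_pair_eq]⟩⟩
  -- generic step: from count_aux output to the goal
  have finish : (∃ F : Finset (Sym2 (V ⊕ W)), F.card = G.edgeFinset.card + 1 ∧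
      (↑F : Set (Sym2 (V ⊕ W))) ⊆ Ehat ∧ ∀ ed ∈ F, ∃ y : W, Sum.inr y ∈ ed) →
      G.edgeFinset.card + 1 ≤ (Ehat \ (Sym2.map Sum.inl '' G.edgeSet)).ncard ∧
      G.edgeFinset.card + 1 ≤ Ehat.ncard := by
    rintro ⟨F, hFcard, hFsub, hFinr⟩
    have hFsub' : (↑F : Set (Sym2 (V ⊕ W))) ⊆ Ehat \ (Sym2.map Sum.inl '' G.edgeSet) := by
      intro ed hed
      refine ⟨hFsub hed, ?_⟩
      rintro ⟨e0, he0, rfl⟩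
      obtain ⟨y, hy⟩ := hFinr _ hed
      rcases Sym2.mem_map.mp hy with ⟨z, _, hz⟩
      simp at hz
    have h1 : G.edgeFinset.card + 1 ≤ (Ehat \ (Sym2.map Sum.inl '' G.edgeSet)).ncard := by
      calc G.edgeFinset.card + 1 = (↑F : Set (Sym2 (V ⊕ W))).ncard := by
            rw [Set.ncard_coe_finset, hFcard]
        _ ≤ _ := Set.ncard_le_ncard hFsub' (hEfin.subset Set.diff_subset)
    exact ⟨h1, le_trans h1 (Set.ncard_le_ncard Set.diff_subset hEfin)⟩
  by_cases h12r : (G.deleteEdges E'').Reachable s1 s2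
  · -- every P2 path must be cut
    obtain ⟨p0⟩ := h12r
    have hp1 : p0.bypass.IsPath := p0.bypass_isPath
    have hp1l : p0.bypass.length < Fintype.card V := hp1.length_lt
    apply finish
    refine count_aux hN3 A.P2 A.P2_isPath A.P2_length A.P2_new A.P2_disj Ehat ?_
    intro i
    by_contra hno
    push_neg at hno
    have htr : ∀ e ∈ (A.P2 i).edges, e ∈ (Ghat.deleteEdges Ehat).edgeSet := by
      intro e he
      rw [SimpleGraph.edgeSet_deleteEdges]
      exact ⟨(A.P2 i).edges_subset_edgeSet he, hno e he⟩
    apply key ((p0.bypass.map f).append ((A.P2 i).transfer _ htr))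
    · rw [SimpleGraph.Walk.length_append, SimpleGraph.Walk.length_transfer,
        SimpleGraph.Walk.length_map, A.P2_length]
      omega
    · intro hmem
      rw [SimpleGraph.Walk.support_append, List.mem_append] at hmem
      rcases hmem with hmem | hmem
      · rw [SimpleGraph.Walk.support_map, List.mem_map] at hmem
        obtain ⟨z, _, hz⟩ := hmem
        simp [f] at hz
      · have hm2 : Sum.inr x ∈ ((A.P2 i).transfer _ htr).support := List.mem_of_mem_tail hmem
        rw [SimpleGraph.Walk.support_transfer] at hm2
        have := A.P2_pstar_disj i _ hm2 hvsup
        simp at this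
  by_cases h23r : (G.deleteEdges E'').Reachable s2 s3
  · -- every P1 path must be cut
    obtain ⟨p0⟩ := h23r
    have hp1 : p0.bypass.IsPath := p0.bypass_isPath
    have hp1l : p0.bypass.length < Fintype.card V := hp1.length_lt
    apply finish
    refine count_aux hN3 A.P1 A.P1_isPath A.P1_length A.P1_new A.P1_disj Ehat ?_
    intro i
    by_contra hno
    push_neg at hno
    have htr : ∀ e ∈ (A.P1 i).edges, e ∈ (Ghat.deleteEdges Ehat).edgeSet := by
      intro e he
      rw [SimpleGraph.edgeSet_deleteEdges]
      exact ⟨(A.P1 i).edges_subset_edgeSet he, hno e he⟩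
    apply key (((A.P1 i).transfer _ htr).append (p0.bypass.map f))
    · rw [SimpleGraph.Walk.length_append, SimpleGraph.Walk.length_transfer,
        SimpleGraph.Walk.length_map, A.P1_length]
      omega
    · intro hmem
      rw [SimpleGraph.Walk.support_append, List.mem_append] at hmem
      rcases hmem with hmem | hmem
      · rw [SimpleGraph.Walk.support_transfer] at hmem
        have := A.P1_pstar_disj i _ hmem hvsup
        simp at this
      · have hm2 : Sum.inr x ∈ (p0.bypass.map f).support := List.mem_of_mem_tail hmem
        rw [SimpleGraph.Walk.support_map, List.mem_map] at hm2
        obtain ⟨z, _, hz⟩ := hm2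
        simp [f] at hz
  by_cases h13r : (G.deleteEdges E'').Reachable s1 s3
  · -- direct contradiction
    exfalso
    obtain ⟨p0⟩ := h13r
    have hp1 : p0.bypass.IsPath := p0.bypass_isPath
    have hp1l : p0.bypass.length < Fintype.card V := hp1.length_lt
    apply key (p0.bypass.map f)
    · rw [SimpleGraph.Walk.length_map]; omega
    · intro hmem
      rw [SimpleGraph.Walk.support_map, List.mem_map] at hmem
      obtain ⟨z, _, hz⟩ := hmem
      simp [f] at hz
  · exact absurd ⟨h12r, h13r, h23r⟩ hnodisc
end

section
/- Let G=(V,E) be an undirected unweighted graph with three distinct terminals s1,s2,s3, and let Ĝ with target path p* be the augmented graph built from G. Then the minimum size of a Force Path Cut solution for (Ĝ,p*) equals the minimum size of an edge set E'⊆E disconnecting s1, s2, and s3 pairwise in G; in particular, every minimum-size edge set disconnecting the terminals in G is a minimum-size Force Path Cut solution for (Ĝ,p*). -/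
open SimpleGraph


section AuxWalk

variable {X : Type*} {H : SimpleGraph X}

/-- In a path, any edge containing the start vertex is the first edge. -/
lemma FC.first_edge {a b c u : X} (hadj : H.Adj a c) (T : H.Walk c b)
    (hT : (Walk.cons hadj T).IsPath) (h : s(a, u) ∈ (Walk.cons hadj T).edges) : u = c := by
  rw [Walk.edges_cons, List.mem_cons] at h
  rcases h with h | h
  · rw [Sym2.eq_iff] at h
    rcases h with ⟨-, h⟩ | ⟨h1, h2⟩
    · exact h
    · exact absurd h1 hadj.ne
  · exact absurd (Walk.fst_mem_support_of_mem_edges T h)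
      ((Walk.cons_isPath_iff hadj T).mp hT).2

/-- In a path of length ≥ 2, the two endpoints are not joined by an edge of the path. -/
lemma FC.endpoints_not_edge {a b : X} (T : H.Walk a b) (hT : T.IsPath)
    (hl : 2 ≤ T.length) : s(a, b) ∉ T.edges := by
  intro h
  cases T with
  | nil => simp at h
  | cons hadj T₁ =>
    have hb := FC.first_edge hadj T₁ hT h
    subst hb
    have := ((Walk.cons_isPath_iff hadj T₁).mp hT).1
    rw [Walk.isPath_iff_eq_nil] at this
    subst this
    simp at hl

variable [DecidableEq X]

/-- `takeUntil` at the start of a path has length 0. -/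
lemma FC.length_takeUntil_start {a b : X} (T : H.Walk a b) (hT : T.IsPath)
    (h : a ∈ T.support) : (T.takeUntil a h).length = 0 := by
  have hp := hT.takeUntil h
  rw [Walk.isPath_iff_eq_nil] at hp
  rw [hp]
  rfl

/-- `takeUntil` at the end of a path has full length. -/
lemma FC.length_takeUntil_end {a b : X} (T : H.Walk a b) (hT : T.IsPath)
    (h : b ∈ T.support) : (T.takeUntil b h).length = T.length := by
  have hp := hT.dropUntil h
  rw [Walk.isPath_iff_eq_nil] at hp
  have := congrArg Walk.length (T.take_spec h)
  rw [Walk.length_append, hp] at this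
  simpa using this

lemma FC.takeUntil_cons {a b c u : X} (hadj : H.Adj a c) (T : H.Walk c b)
    (hne : a ≠ u) (hu : u ∈ T.support) (hu' : u ∈ (Walk.cons hadj T).support) :
    (Walk.cons hadj T).takeUntil u hu' = Walk.cons hadj (T.takeUntil u hu) := by
  rw [Walk.takeUntil]
  simp [hne]


/-- Along a path, `takeUntil` lengths of adjacent (via a path edge) vertices differ by ≤ 1. -/
lemma FC.takeUntil_le_of_adj :
    ∀ {a b : X} (T : H.Walk a b), T.IsPath → ∀ {x u : X}, s(x, u) ∈ T.edges →
      ∀ (hx : x ∈ T.support) (hu : u ∈ T.support),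
      (T.takeUntil u hu).length ≤ (T.takeUntil x hx).length + 1 := by
  intro a b T
  induction T with
  | nil => intro _ x u he _ _; simp at he
  | @cons a c b hadj T₁ ih =>
    intro hT x u he hx hu
    have hT₁ : T₁.IsPath := ((Walk.cons_isPath_iff hadj T₁).mp hT).1
    have hanot : a ∉ T₁.support := ((Walk.cons_isPath_iff hadj T₁).mp hT).2
    rw [Walk.edges_cons, List.mem_cons] at he
    rcases he with he | he
    · rw [Sym2.eq_iff] at he
      rcases he with ⟨hxa, huc⟩ | ⟨hxc, hua⟩
      · subst hxa; subst huc
        have h1 : ((Walk.cons hadj T₁).takeUntil u hu) =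
            Walk.cons hadj (T₁.takeUntil u T₁.start_mem_support) :=
          FC.takeUntil_cons hadj T₁ hadj.ne T₁.start_mem_support hu
        rw [h1, Walk.length_cons,
          FC.length_takeUntil_start T₁ hT₁ T₁.start_mem_support]
        omega
      · subst hua
        rw [FC.length_takeUntil_start _ hT hu]
        omega
    · have hxT : x ∈ T₁.support := Walk.fst_mem_support_of_mem_edges T₁ he
      have huT : u ∈ T₁.support := Walk.snd_mem_support_of_mem_edges T₁ he
      have hax : a ≠ x := fun h => hanot (h ▸ hxT)
      have hau : a ≠ u := fun h => hanot (h ▸ huT)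
      rw [FC.takeUntil_cons hadj T₁ hax hxT hx, FC.takeUntil_cons hadj T₁ hau huT hu,
        Walk.length_cons, Walk.length_cons]
      have := ih hT₁ he hxT huT
      omega

lemma FC.length_takeUntil_snd {a b u : X} (T : H.Walk a b) (hT : T.IsPath)
    (he : s(a, u) ∈ T.edges) (hu : u ∈ T.support) : (T.takeUntil u hu).length ≤ 1 := by
  have := FC.takeUntil_le_of_adj T hT he T.start_mem_support hu
  rw [FC.length_takeUntil_start T hT T.start_mem_support] at this
  omega

/-- The corridor lemma: a path entering the interior of a "corridor" path `T` and
not allowed to use `a`, must run along `T` to its end `b`. -/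
lemma FC.corridor {a b : X} (T : H.Walk a b) (hT : T.IsPath)
    (hcl : ∀ v ∈ T.support, v ≠ a → v ≠ b → ∀ u, H.Adj v u → s(v, u) ∈ T.edges) :
    ∀ {x y : X} (r : H.Walk x y), r.IsPath → ∀ (hx : x ∈ T.support),
      a ∉ r.support → (y = b ∨ y ∉ T.support) →
      ∃ (pre : H.Walk x b) (r' : H.Walk b y),
        r = pre.append r' ∧ (∀ e ∈ pre.edges, e ∈ T.edges) ∧
          T.length ≤ pre.length + (T.takeUntil x hx).length := by
  intro x₀ y₀ r
  induction r with
  | nil =>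
    intro _ hx ha hy
    rcases hy with rfl | h
    · exact ⟨Walk.nil, Walk.nil, rfl, by simp, by
        rw [FC.length_takeUntil_end T hT hx]; simp⟩
    · exact absurd hx h
  | @cons x u y hadj r₁ ih =>
    intro hr hx ha hy
    by_cases hxb : x = b
    · subst hxb
      refine ⟨Walk.nil, Walk.cons hadj r₁, by simp, by simp, ?_⟩
      rw [FC.length_takeUntil_end T hT hx]; simp
    · have hxa : x ≠ a := by
        rintro rfl; exact ha ((Walk.cons hadj r₁).start_mem_support)
      have he : s(x, u) ∈ T.edges := hcl x hx hxa hxb u hadj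
      have hu : u ∈ T.support := Walk.snd_mem_support_of_mem_edges T he
      have hr₁ : r₁.IsPath := ((Walk.cons_isPath_iff hadj r₁).mp hr).1
      have ha₁ : a ∉ r₁.support := fun h => ha (by rw [Walk.support_cons]; exact List.mem_cons_of_mem _ h)
      obtain ⟨pre₁, r', heq, hsub, hbd⟩ := ih hr₁ hu ha₁ hy
      refine ⟨Walk.cons hadj pre₁, r', by rw [heq, Walk.cons_append], ?_, ?_⟩
      · intro e hee
        rw [Walk.edges_cons, List.mem_cons] at hee
        rcases hee with rfl | hee
        · exact he
        · exact hsub e hee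
      · have := FC.takeUntil_le_of_adj T hT he hx hu
        rw [Walk.length_cons]
        omega

/-- Two paths with the same endpoints, one of whose edges are contained in the
other's, are equal. -/
lemma FC.path_eq_of_edges_subset :
    ∀ {a b : X} (P Q : H.Walk a b), P.IsPath → Q.IsPath →
      (∀ e ∈ Q.edges, e ∈ P.edges) → Q = P := by
  intro a b P
  induction P with
  | nil =>
    intro Q _ hQ _
    exact Walk.isPath_iff_eq_nil.mp hQ
  | @cons a c b hadj P₁ ih =>
    intro Q hP hQ hsub
    have hP₁ : P₁.IsPath := ((Walk.cons_isPath_iff hadj P₁).mp hP).1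
    have hanot : a ∉ P₁.support := ((Walk.cons_isPath_iff hadj P₁).mp hP).2
    cases Q with
    | nil =>
      exact absurd P₁.end_mem_support hanot
    | @cons _ u _ f Q₁ =>
      have hu : u = c := FC.first_edge hadj P₁ hP
        (hsub _ (by rw [Walk.edges_cons]; exact List.mem_cons_self))
      subst hu
      have hQ₁ : Q₁.IsPath := ((Walk.cons_isPath_iff f Q₁).mp hQ).1
      have hanotQ : a ∉ Q₁.support := ((Walk.cons_isPath_iff f Q₁).mp hQ).2
      have hsub₁ : ∀ e ∈ Q₁.edges, e ∈ P₁.edges := by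
        intro e he
        have : e ∈ (Walk.cons hadj P₁).edges := hsub e (by
          rw [Walk.edges_cons]; exact List.mem_cons_of_mem _ he)
        rw [Walk.edges_cons, List.mem_cons] at this
        rcases this with rfl | h
        · exact absurd (Walk.fst_mem_support_of_mem_edges Q₁ he) hanotQ
        · exact h
      rw [ih Q₁ hP₁ hQ₁ hsub₁]

end AuxWalk


section AugFacts
variable {V W : Type*} {G : SimpleGraph V} {s1 s2 s3 : V} {N M : ℕ}
  {Ghat : SimpleGraph (V ⊕ W)} (A : AugSpec G s1 s2 s3 N M Ghat)

lemma FC.inl_mem_P1 {v : V} {i} (h : Sum.inl v ∈ (A.P1 i).support) :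
    v = s1 ∨ v = s2 := by
  by_cases h1 : (Sum.inl v : V ⊕ W) = Sum.inl s1
  · exact Or.inl (Sum.inl.inj h1)
  · by_cases h2 : (Sum.inl v : V ⊕ W) = Sum.inl s2
    · exact Or.inr (Sum.inl.inj h2)
    · rcases A.P1_new i _ h h1 h2 with ⟨x, hx⟩; simp at hx

lemma FC.inl_mem_P2 {v : V} {i} (h : Sum.inl v ∈ (A.P2 i).support) :
    v = s2 ∨ v = s3 := by
  by_cases h1 : (Sum.inl v : V ⊕ W) = Sum.inl s2
  · exact Or.inl (Sum.inl.inj h1)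
  · by_cases h2 : (Sum.inl v : V ⊕ W) = Sum.inl s3
    · exact Or.inr (Sum.inl.inj h2)
    · rcases A.P2_new i _ h h1 h2 with ⟨x, hx⟩; simp at hx

lemma FC.inl_mem_pstar {v : V} (h : Sum.inl v ∈ A.pstar.support) :
    v = s1 ∨ v = s3 := by
  by_cases h1 : (Sum.inl v : V ⊕ W) = Sum.inl s1
  · exact Or.inl (Sum.inl.inj h1)
  · by_cases h2 : (Sum.inl v : V ⊕ W) = Sum.inl s3
    · exact Or.inr (Sum.inl.inj h2)
    · rcases A.pstar_new _ h h1 h2 with ⟨x, hx⟩; simp at hx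

lemma FC.P1_no_end_edge (hN : 2 ≤ N) (i) :
    s(Sum.inl s1, (Sum.inl s2 : V ⊕ W)) ∉ (A.P1 i).edges :=
  FC.endpoints_not_edge _ (A.P1_isPath i) (by rw [A.P1_length i]; exact hN)

lemma FC.P2_no_end_edge (hN : 2 ≤ N) (i) :
    s(Sum.inl s2, (Sum.inl s3 : V ⊕ W)) ∉ (A.P2 i).edges :=
  FC.endpoints_not_edge _ (A.P2_isPath i) (by rw [A.P2_length i]; exact hN)

lemma FC.pstar_no_end_edge (hN : 2 ≤ N) :
    s(Sum.inl s1, (Sum.inl s3 : V ⊕ W)) ∉ A.pstar.edges :=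
  FC.endpoints_not_edge _ A.pstar_isPath (by rw [A.pstar_length]; omega)

lemma FC.closure_P1 (i) : ∀ v ∈ (A.P1 i).support, v ≠ Sum.inl s1 → v ≠ Sum.inl s2 →
    ∀ u, Ghat.Adj v u → s(v, u) ∈ (A.P1 i).edges := by
  intro v hv h1 h2 u hadj
  obtain ⟨x, rfl⟩ := A.P1_new i v hv h1 h2
  rcases (A.adj_iff _ _).mp hadj with ⟨u₁, v₁, hh, -, -⟩ | ⟨j, hj⟩ | ⟨j, hj⟩ | hj
  · simp at hh
  · by_cases hij : j = i
    · exact hij ▸ hj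
    · have := A.P1_disj i j (fun h => hij h.symm) _ hv
        (Walk.fst_mem_support_of_mem_edges _ hj)
      simp at this
  · have := A.P1_P2_disj i j _ hv (Walk.fst_mem_support_of_mem_edges _ hj)
    simp at this
  · have := A.P1_pstar_disj i _ hv (Walk.fst_mem_support_of_mem_edges _ hj)
    simp at this

lemma FC.closure_P2 (i) : ∀ v ∈ (A.P2 i).support, v ≠ Sum.inl s2 → v ≠ Sum.inl s3 →
    ∀ u, Ghat.Adj v u → s(v, u) ∈ (A.P2 i).edges := by
  intro v hv h1 h2 u hadj
  obtain ⟨x, rfl⟩ := A.P2_new i v hv h1 h2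
  rcases (A.adj_iff _ _).mp hadj with ⟨u₁, v₁, hh, -, -⟩ | ⟨j, hj⟩ | ⟨j, hj⟩ | hj
  · simp at hh
  · have := A.P1_P2_disj j i _ (Walk.fst_mem_support_of_mem_edges _ hj) hv
    simp at this
  · by_cases hij : j = i
    · exact hij ▸ hj
    · have := A.P2_disj i j (fun h => hij h.symm) _ hv
        (Walk.fst_mem_support_of_mem_edges _ hj)
      simp at this
  · have := A.P2_pstar_disj i _ hv (Walk.fst_mem_support_of_mem_edges _ hj)
    simp at this

lemma FC.closure_pstar : ∀ v ∈ A.pstar.support, v ≠ Sum.inl s1 → v ≠ Sum.inl s3 →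
    ∀ u, Ghat.Adj v u → s(v, u) ∈ A.pstar.edges := by
  intro v hv h1 h2 u hadj
  obtain ⟨x, rfl⟩ := A.pstar_new v hv h1 h2
  rcases (A.adj_iff _ _).mp hadj with ⟨u₁, v₁, hh, -, -⟩ | ⟨j, hj⟩ | ⟨j, hj⟩ | hj
  · simp at hh
  · have := A.P1_pstar_disj j _ (Walk.fst_mem_support_of_mem_edges _ hj) hv
    simp at this
  · have := A.P2_pstar_disj j _ (Walk.fst_mem_support_of_mem_edges _ hj) hv
    simp at this
  · exact hj

include A in
/-- Trap lemma. -/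
lemma FC.trap (E' : Set (Sym2 V)) (C : Set V) (s : V)
    (hC : ∀ ⦃v v'⦄, v ∈ C → G.Adj v v' → s(v, v') ∉ E' → v' ∈ C)
    (hs1 : s1 ∈ C → s1 = s) (hs2 : s2 ∈ C → s2 = s) (hs3 : s3 ∈ C → s3 = s) :
    ∀ {x t : V ⊕ W} (r : Ghat.Walk x t),
      (∀ e ∈ r.edges, e ∉ Sym2.map Sum.inl '' E') → Sum.inl s ∉ r.support →
      ∀ v : V, x = Sum.inl v → v ∈ C → ∃ v' ∈ C, t = Sum.inl v' := by
  intro x t r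
  induction r with
  | nil => intro _ _ v hx hv; exact ⟨v, hv, hx⟩
  | @cons x u t hadj r₁ ih =>
    intro hE hs v hx hv
    subst hx
    have hvs : v ≠ s := by
      rintro rfl; exact hs (Walk.start_mem_support _)
    have hE₁ : ∀ e ∈ r₁.edges, e ∉ Sym2.map Sum.inl '' E' := fun e he =>
      hE e (by rw [Walk.edges_cons]; exact List.mem_cons_of_mem _ he)
    have hs₁ : Sum.inl s ∉ r₁.support := fun h =>
      hs (by rw [Walk.support_cons]; exact List.mem_cons_of_mem _ h)
    rcases (A.adj_iff _ _).mp hadj with ⟨u₁, v₁, hh1, hh2, hGadj⟩ | ⟨j, hj⟩ | ⟨j, hj⟩ | hj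
    · have hu₁ : u₁ = v := (Sum.inl.inj hh1).symm
      subst hu₁
      have hnotE : s(u₁, v₁) ∉ E' := by
        intro hmem
        exact hE _ (by rw [Walk.edges_cons]; exact List.mem_cons_self)
          ⟨s(u₁, v₁), hmem, by rw [Sym2.map_pair_eq, hh2]⟩
      exact ih hE₁ hs₁ v₁ hh2 (hC hv hGadj hnotE)
    · rcases FC.inl_mem_P1 A (Walk.fst_mem_support_of_mem_edges _ hj) with rfl | rfl
      · exact absurd (hs1 hv) hvs
      · exact absurd (hs2 hv) hvs
    · rcases FC.inl_mem_P2 A (Walk.fst_mem_support_of_mem_edges _ hj) with rfl | rfl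
      · exact absurd (hs2 hv) hvs
      · exact absurd (hs3 hv) hvs
    · rcases FC.inl_mem_pstar A (Walk.fst_mem_support_of_mem_edges _ hj) with rfl | rfl
      · exact absurd (hs1 hv) hvs
      · exact absurd (hs3 hv) hvs

end AugFacts

section KeyProp
variable {V W : Type*} {G : SimpleGraph V} {s1 s2 s3 : V} {N M : ℕ}
  {Ghat : SimpleGraph (V ⊕ W)} (A : AugSpec G s1 s2 s3 N M Ghat)

include A in
lemma FC.keyProp (hN : 3 ≤ N)
    (h12 : s1 ≠ s2) (h13 : s1 ≠ s3) (h23 : s2 ≠ s3)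
    (E' : Set (Sym2 V)) (hdis : Disconnects G E' s1 s2 s3)
    (Q : Ghat.Walk (Sum.inl s1) (Sum.inl s3)) (hQ : Q.IsPath)
    (hQE : ∀ e ∈ Q.edges, e ∉ Sym2.map Sum.inl '' E')
    (hne : Q ≠ A.pstar) : 2 * N ≤ Q.length := by
  classical
  have hN2 : 2 ≤ N := by omega
  have hs3P1 : ∀ i, Sum.inl s3 ∉ (A.P1 i).support := fun i h => by
    rcases FC.inl_mem_P1 A h with h' | h'
    · exact h13 h'.symm
    · exact h23 h'.symm
  have hs1P2 : ∀ i, Sum.inl s1 ∉ (A.P2 i).support := fun i h => by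
    rcases FC.inl_mem_P2 A h with h' | h'
    · exact h12 h'
    · exact h13 h'
  have hs2ps : Sum.inl s2 ∉ A.pstar.support := fun h => by
    rcases FC.inl_mem_pstar A h with h' | h'
    · exact h12 h'.symm
    · exact h23 h'
  rcases Classical.em (∃ z ∈ Q.support, z ∈ A.pstar.support ∧ z ≠ Sum.inl s1 ∧ z ≠ Sum.inl s3) with hspine | hspine
  · exfalso
    apply hne
    obtain ⟨z, hzQ, hzP, hz1, hz3⟩ := hspine
    have hQ3 := hQ.takeUntil hzQ
    have hQ2 := hQ.dropUntil hzQ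
    have hnd := hQ.support_nodup
    rw [show Q.support = (Q.takeUntil z hzQ).support ++ (Q.dropUntil z hzQ).support.tail by
      conv_lhs => rw [← Q.take_spec hzQ]
      rw [Walk.support_append]] at hnd
    have hdisj := List.disjoint_of_nodup_append hnd
    have hs1not : Sum.inl s1 ∉ (Q.dropUntil z hzQ).support := by
      intro h
      rw [Walk.support_eq_cons, List.mem_cons] at h
      rcases h with h | h
      · exact hz1 h.symm
      · exact hdisj (Walk.start_mem_support _) h
    have hs3not3 : Sum.inl s3 ∉ (Q.takeUntil z hzQ).support := by
      intro h
      have h3d : Sum.inl s3 ∈ (Q.dropUntil z hzQ).support.tail := by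
        have h2 := (Q.dropUntil z hzQ).end_mem_support
        rw [Walk.support_eq_cons, List.mem_cons] at h2
        rcases h2 with h2 | h2
        · exact absurd h2.symm hz3
        · exact h2
      exact hdisj h h3d
    obtain ⟨pre, r', heq, hpreE, -⟩ := FC.corridor A.pstar A.pstar_isPath
      (FC.closure_pstar A) (Q.dropUntil z hzQ) hQ2 hzP hs1not (Or.inl rfl)
    have hr' : r'.IsPath := by
      have h1 : (pre.append r').IsPath := heq ▸ hQ2
      exact h1.of_append_right
    rw [Walk.isPath_iff_eq_nil] at hr'
    subst hr'
    rw [Walk.append_nil] at heq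
    have hd_edges : ∀ e ∈ (Q.dropUntil z hzQ).edges, e ∈ A.pstar.edges := by
      rw [heq]; exact hpreE
    have hclrev : ∀ v ∈ A.pstar.reverse.support, v ≠ Sum.inl s3 → v ≠ Sum.inl s1 →
        ∀ u, Ghat.Adj v u → s(v, u) ∈ A.pstar.reverse.edges := by
      intro v hv h3 h1 u hadj
      rw [Walk.support_reverse, List.mem_reverse] at hv
      rw [Walk.edges_reverse, List.mem_reverse]
      exact FC.closure_pstar A v hv h1 h3 u hadj
    obtain ⟨pre₂, r₂, heq₂, hpre₂, -⟩ := FC.corridor A.pstar.reverse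
      A.pstar_isPath.reverse hclrev (Q.takeUntil z hzQ).reverse hQ3.reverse
      (by rw [Walk.support_reverse, List.mem_reverse]; exact hzP)
      (by rw [Walk.support_reverse, List.mem_reverse]; exact hs3not3)
      (Or.inl rfl)
    have hr₂ : r₂.IsPath := by
      have h1 : (pre₂.append r₂).IsPath := heq₂ ▸ hQ3.reverse
      exact h1.of_append_right
    rw [Walk.isPath_iff_eq_nil] at hr₂
    subst hr₂
    rw [Walk.append_nil] at heq₂
    have ht_edges : ∀ e ∈ (Q.takeUntil z hzQ).edges, e ∈ A.pstar.edges := by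
      intro e he
      have h1 : e ∈ (Q.takeUntil z hzQ).reverse.edges := by
        rw [Walk.edges_reverse, List.mem_reverse]; exact he
      rw [heq₂] at h1
      have h2 := hpre₂ e h1
      rwa [Walk.edges_reverse, List.mem_reverse] at h2
    apply FC.path_eq_of_edges_subset A.pstar Q A.pstar_isPath hQ
    intro e he
    rw [← Q.take_spec hzQ, Walk.edges_append, List.mem_append] at he
    rcases he with he | he
    · exact ht_edges e he
    · exact hd_edges e he
  · have hspine' : ∀ z ∈ Q.support, z ∈ A.pstar.support →
        z = Sum.inl s1 ∨ z = Sum.inl s3 := by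
      intro z hz1 hz2
      by_contra hc
      push_neg at hc
      exact hspine ⟨z, hz1, hz2, hc.1, hc.2⟩
    obtain ⟨u, hadj, Q₁, rfl⟩ := Walk.exists_eq_cons_of_ne
      (by simp [h13] : (Sum.inl s1 : V ⊕ W) ≠ Sum.inl s3) Q
    have hQ₁ : Q₁.IsPath := ((Walk.cons_isPath_iff _ _).mp hQ).1
    have hs1Q₁ : Sum.inl s1 ∉ Q₁.support := ((Walk.cons_isPath_iff _ _).mp hQ).2
    have hQ₁E : ∀ e ∈ Q₁.edges, e ∉ Sym2.map Sum.inl '' E' := fun e he =>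
      hQE e (by rw [Walk.edges_cons]; exact List.mem_cons_of_mem _ he)
    have hheadE : s(Sum.inl s1, u) ∉ Sym2.map Sum.inl '' E' :=
      hQE _ (by rw [Walk.edges_cons]; exact List.mem_cons_self)
    rcases (A.adj_iff _ _).mp hadj with ⟨u₁, v₁, hh1, hh2, hGadj⟩ | ⟨i, hi⟩ | ⟨i, hi⟩ | hps
    · -- first edge is a G-edge: trapped in the s1-region
      exfalso
      obtain rfl : u₁ = s1 := (Sum.inl.inj hh1).symm
      have hnE : s(u₁, v₁) ∉ E' := fun hm =>
        hheadE ⟨_, hm, by rw [Sym2.map_pair_eq, hh2]⟩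
      obtain ⟨v', hv', ht⟩ := FC.trap A E'
        {v | (G.deleteEdges E').Reachable u₁ v} u₁
        (fun v v' hv hGa hnot => hv.trans (SimpleGraph.Adj.reachable
          (by rw [SimpleGraph.deleteEdges_adj]; exact ⟨hGa, hnot⟩)))
        (fun _ => rfl) (fun h => absurd h hdis.1) (fun h => absurd h hdis.2.1)
        Q₁ hQ₁E hs1Q₁ v₁ hh2
        (SimpleGraph.Adj.reachable (by rw [SimpleGraph.deleteEdges_adj]; exact ⟨hGadj, hnE⟩))
      obtain rfl : v' = s3 := Sum.inl.inj ht.symm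
      exact absurd hv' hdis.2.1
    · -- first edge enters the interior of P1 i
      have hu_mem : u ∈ (A.P1 i).support := Walk.snd_mem_support_of_mem_edges _ hi
      have htk := FC.length_takeUntil_snd _ (A.P1_isPath i) hi hu_mem
      obtain ⟨pre, r', heq, -, hbd⟩ := FC.corridor (A.P1 i) (A.P1_isPath i)
        (FC.closure_P1 A i) Q₁ hQ₁ hu_mem hs1Q₁ (Or.inr (hs3P1 i))
      have hbdN : N ≤ pre.length + 1 := by rw [A.P1_length i] at hbd; omega
      have hr' : r'.IsPath := by
        have h1 : (pre.append r').IsPath := heq ▸ hQ₁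
        exact h1.of_append_right
      have hr'sub : ∀ v ∈ r'.support, v ∈ Q₁.support := by
        rw [heq]; exact fun v hv => Walk.subset_support_append_right _ _ hv
      have hs1r' : Sum.inl s1 ∉ r'.support := fun h => hs1Q₁ (hr'sub _ h)
      have hr'E : ∀ e ∈ r'.edges, e ∉ Sym2.map Sum.inl '' E' := by
        intro e he
        apply hQ₁E
        rw [heq, Walk.edges_append, List.mem_append]; exact Or.inr he
      obtain ⟨u₂, hadj₂, r₂, rfl⟩ := Walk.exists_eq_cons_of_ne
        (by simp [h23] : (Sum.inl s2 : V ⊕ W) ≠ Sum.inl s3) r'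
      have hr₂ : r₂.IsPath := ((Walk.cons_isPath_iff _ _).mp hr').1
      have hs2r₂ : Sum.inl s2 ∉ r₂.support := ((Walk.cons_isPath_iff _ _).mp hr').2
      have hhead₂ : s(Sum.inl s2, u₂) ∉ Sym2.map Sum.inl '' E' :=
        hr'E _ (by rw [Walk.edges_cons]; exact List.mem_cons_self)
      have hr₂E : ∀ e ∈ r₂.edges, e ∉ Sym2.map Sum.inl '' E' := fun e he =>
        hr'E e (by rw [Walk.edges_cons]; exact List.mem_cons_of_mem _ he)
      have hs1r₂ : Sum.inl s1 ∉ r₂.support := fun h =>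
        hs1r' (by rw [Walk.support_cons]; exact List.mem_cons_of_mem _ h)
      rcases (A.adj_iff _ _).mp hadj₂ with ⟨u₁', v₁', hh1', hh2', hGadj'⟩ | ⟨j, hj⟩ | ⟨j, hj⟩ | hps'
      · -- G-edge at s2 : trapped in the s2-region
        exfalso
        obtain rfl : u₁' = s2 := (Sum.inl.inj hh1').symm
        have hnE : s(u₁', v₁') ∉ E' := fun hm =>
          hhead₂ ⟨_, hm, by rw [Sym2.map_pair_eq, hh2']⟩
        obtain ⟨v', hv', ht⟩ := FC.trap A E'
          {v | (G.deleteEdges E').Reachable u₁' v} u₁'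
          (fun v v' hv hGa hnot => hv.trans (SimpleGraph.Adj.reachable
            (by rw [SimpleGraph.deleteEdges_adj]; exact ⟨hGa, hnot⟩)))
          (fun h => absurd h.symm hdis.1) (fun _ => rfl) (fun h => absurd h hdis.2.2)
          r₂ hr₂E hs2r₂ v₁' hh2'
          (SimpleGraph.Adj.reachable (by rw [SimpleGraph.deleteEdges_adj]; exact ⟨hGadj', hnE⟩))
        obtain rfl : v' = s3 := Sum.inl.inj ht.symm
        exact absurd hv' hdis.2.2
      · -- P1 j edge at s2 : would crawl back to s1
        exfalso
        have hj' : s(Sum.inl s2, u₂) ∈ (A.P1 j).reverse.edges := by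
          rw [Walk.edges_reverse, List.mem_reverse]; exact hj
        have hu₂mem : u₂ ∈ (A.P1 j).reverse.support :=
          Walk.snd_mem_support_of_mem_edges _ hj'
        have hclrev : ∀ v ∈ (A.P1 j).reverse.support, v ≠ Sum.inl s2 → v ≠ Sum.inl s1 →
            ∀ w, Ghat.Adj v w → s(v, w) ∈ (A.P1 j).reverse.edges := by
          intro v hv hv2 hv1 w hw
          rw [Walk.support_reverse, List.mem_reverse] at hv
          rw [Walk.edges_reverse, List.mem_reverse]
          exact FC.closure_P1 A j v hv hv1 hv2 w hw
        have hs3rev : (Sum.inl s3 : V ⊕ W) ∉ (A.P1 j).reverse.support := by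
          rw [Walk.support_reverse, List.mem_reverse]; exact hs3P1 j
        obtain ⟨pre₃, r₃, heq₃, -, -⟩ := FC.corridor ((A.P1 j).reverse)
          (A.P1_isPath j).reverse hclrev r₂ hr₂ hu₂mem hs2r₂ (Or.inr hs3rev)
        apply hs1r₂
        rw [heq₃]
        exact Walk.subset_support_append_right _ _ (Walk.start_mem_support r₃)
      · -- P2 j edge at s2 : cross the second corridor; count
        have hu₂mem : u₂ ∈ (A.P2 j).support := Walk.snd_mem_support_of_mem_edges _ hj
        have htk₂ := FC.length_takeUntil_snd _ (A.P2_isPath j) hj hu₂mem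
        obtain ⟨pre₄, r₄, heq₄, -, hbd₄⟩ := FC.corridor (A.P2 j) (A.P2_isPath j)
          (FC.closure_P2 A j) r₂ hr₂ hu₂mem hs2r₂ (Or.inl rfl)
        have hbdN₂ : N ≤ pre₄.length + 1 := by rw [A.P2_length j] at hbd₄; omega
        have hlen₂ : r₂.length = pre₄.length + r₄.length := by
          rw [heq₄, Walk.length_append]
        have hlen₁ : Q₁.length = pre.length + (r₂.length + 1) := by
          rw [heq, Walk.length_append, Walk.length_cons]
        rw [Walk.length_cons]
        omega
      · -- pstar edge at s2 : impossible
        exact absurd (Walk.fst_mem_support_of_mem_edges _ hps') hs2ps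
    · -- P2 i edge at s1 : impossible
      exact absurd (Walk.fst_mem_support_of_mem_edges _ hi) (hs1P2 i)
    · -- pstar edge at s1 : second vertex is spine interior, contradiction
      exfalso
      have hu_mem : u ∈ A.pstar.support := Walk.snd_mem_support_of_mem_edges _ hps
      have huQ : u ∈ (Walk.cons hadj Q₁).support := by
        rw [Walk.support_cons]; exact List.mem_cons_of_mem _ Q₁.start_mem_support
      rcases hspine' u huQ hu_mem with rfl | rfl
      · exact hadj.ne rfl
      · exact FC.pstar_no_end_edge A hN2 hps
end KeyProp

section MapLe
variable {X : Type*} {H H' : SimpleGraph X} (hle : H ≤ H')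

lemma FC.length_mapLe {a b : X} (p : H.Walk a b) : (p.mapLe hle).length = p.length := by
  simp [Walk.mapLe]

lemma FC.support_mapLe {a b : X} (p : H.Walk a b) : (p.mapLe hle).support = p.support := by
  rw [Walk.mapLe, Walk.support_map]
  convert List.map_id _
  rfl

lemma FC.edges_mapLe {a b : X} (p : H.Walk a b) : (p.mapLe hle).edges = p.edges := by
  rw [Walk.mapLe, Walk.edges_map]
  have : Sym2.map ⇑(SimpleGraph.Hom.ofLE hle) = id := by
    ext e
    induction e using Sym2.ind with
    | _ x y => rfl
  rw [this, List.map_id]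

end MapLe

section DirA
variable {V W : Type*} {G : SimpleGraph V} {s1 s2 s3 : V} {N M : ℕ}
  {Ghat : SimpleGraph (V ⊕ W)} (A : AugSpec G s1 s2 s3 N M Ghat)

include A in
lemma FC.dirA (hN : 3 ≤ N)
    (h12 : s1 ≠ s2) (h13 : s1 ≠ s3) (h23 : s2 ≠ s3)
    (E' : Set (Sym2 V)) (hsub : E' ⊆ G.edgeSet) (hdis : Disconnects G E' s1 s2 s3) :
    FPCSol Ghat A.pstar (Sym2.map Sum.inl '' E') := by
  have hN2 : 2 ≤ N := by omega
  refine ⟨?_, ?_, ?_⟩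
  · rintro ehat ⟨e, he, rfl⟩
    revert he
    induction e using Sym2.ind with
    | _ u v =>
      intro he
      have hadj : G.Adj u v := G.mem_edgeSet.mp (hsub he)
      rw [Sym2.map_pair_eq]
      exact Ghat.mem_edgeSet.mpr ((A.adj_iff _ _).mpr (Or.inl ⟨u, v, rfl, rfl, hadj⟩))
  · rintro e he ⟨e', he', rfl⟩
    revert he
    induction e' using Sym2.ind with
    | _ x y =>
      intro he
      rw [Sym2.map_pair_eq] at he
      have hxy : (Sum.inl x : V ⊕ W) ≠ Sum.inl y :=
        (Ghat.mem_edgeSet.mp (A.pstar.edges_subset_edgeSet he)).ne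
      rcases FC.inl_mem_pstar A (Walk.fst_mem_support_of_mem_edges _ he) with rfl | rfl <;>
        rcases FC.inl_mem_pstar A (Walk.snd_mem_support_of_mem_edges _ he) with rfl | rfl
      · exact hxy rfl
      · exact FC.pstar_no_end_edge A hN2 he
      · rw [Sym2.eq_swap] at he
        exact FC.pstar_no_end_edge A hN2 he
      · exact hxy rfl
  · intro q hq hmap
    have hQpath : (q.mapLe (SimpleGraph.deleteEdges_le _)).IsPath :=
      (Walk.mapLe_isPath _).mpr hq
    have hQE : ∀ e ∈ (q.mapLe (SimpleGraph.deleteEdges_le _)).edges,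
        e ∉ Sym2.map Sum.inl '' E' := by
      intro e he
      rw [FC.edges_mapLe] at he
      have h1 := q.edges_subset_edgeSet he
      rw [SimpleGraph.edgeSet_deleteEdges] at h1
      exact h1.2
    have hkey := FC.keyProp A hN h12 h13 h23 E' hdis
      (q.mapLe (SimpleGraph.deleteEdges_le _)) hQpath hQE hmap
    rw [A.pstar_length]
    rw [FC.length_mapLe] at hkey
    omega

end DirA

lemma FC.pigeon {α : Type*} {M : ℕ} (F : Fin (M + 1) → List α) (S : Set α)
    (hfin : S.Finite) (hcard : S.ncard ≤ M)
    (hdisj : ∀ i j, i ≠ j → ∀ e, e ∈ F i → e ∈ F j → False) :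
    ∃ i, ∀ e ∈ F i, e ∉ S := by
  by_contra hc
  push_neg at hc
  choose f hf1 hf2 using hc
  have hinj : Function.Injective f := by
    intro i j hij
    by_contra hne
    exact hdisj i j hne (f i) (hf1 i) (hij ▸ hf1 j)
  have h1 : (Finset.univ : Finset (Fin (M + 1))).card ≤ hfin.toFinset.card :=
    Finset.card_le_card_of_injOn f (fun i _ => hfin.mem_toFinset.mpr (hf2 i))
      hinj.injOn
  rw [Finset.card_univ, Fintype.card_fin, ← Set.ncard_eq_toFinset_card _ hfin] at h1
  omega

section DirB
variable {V W : Type*} [Fintype V] [DecidableEq V] {G : SimpleGraph V}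
  [DecidableRel G.Adj] {s1 s2 s3 : V} {Ghat : SimpleGraph (V ⊕ W)}
  (A : AugSpec G s1 s2 s3 (Fintype.card V) G.edgeFinset.card Ghat)

include A in
lemma FC.dirB (h12 : s1 ≠ s2) (h13 : s1 ≠ s3) (h23 : s2 ≠ s3)
    (Ehat : Set (Sym2 (V ⊕ W))) (hF : FPCSol Ghat A.pstar Ehat)
    (E₀ : Set (Sym2 V)) (hE₀sub : E₀ ⊆ G.edgeSet) (hE₀dis : Disconnects G E₀ s1 s2 s3) :
    sInf {n : ℕ | ∃ E'' : Set (Sym2 V),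
      E'' ⊆ G.edgeSet ∧ Disconnects G E'' s1 s2 s3 ∧ E''.ncard = n} ≤ Ehat.ncard := by
  classical
  have hN : 3 ≤ Fintype.card V := by
    have h : ({s1, s2, s3} : Finset V).card = 3 := by
      rw [Finset.card_insert_of_notMem (by simp [h12, h13]),
        Finset.card_insert_of_notMem (by simp [h23]), Finset.card_singleton]
    calc 3 = ({s1, s2, s3} : Finset V).card := h.symm
      _ ≤ (Finset.univ : Finset V).card := Finset.card_le_univ _
      _ = Fintype.card V := rfl
  have hN2 : 2 ≤ Fintype.card V := by omega
  have hs2ps : Sum.inl s2 ∉ A.pstar.support := fun h => by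
    rcases FC.inl_mem_pstar A h with h' | h'
    · exact h12 h'.symm
    · exact h23 h'
  have hMb : E₀.ncard ≤ G.edgeFinset.card := by
    have h1 := Set.ncard_le_ncard hE₀sub G.edgeSet.toFinite
    have h2 : G.edgeSet.ncard = G.edgeFinset.card := by
      rw [Set.ncard_eq_toFinset_card']
      exact congrArg Finset.card (by ext; simp)
    omega
  have h1 : sInf {n : ℕ | ∃ E'' : Set (Sym2 V),
      E'' ⊆ G.edgeSet ∧ Disconnects G E'' s1 s2 s3 ∧ E''.ncard = n} ≤ E₀.ncard :=
    Nat.sInf_le ⟨E₀, hE₀sub, hE₀dis, rfl⟩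
  by_cases hbig : Ehat.ncard ≤ G.edgeFinset.card
  swap
  · omega
  -- Ehat is finite
  have hfinhat : Ehat.Finite := by
    have hbound : Ghat.edgeSet ⊆ (Sym2.map Sum.inl '' G.edgeSet) ∪
        ((⋃ i, {e | e ∈ (A.P1 i).edges}) ∪
          ((⋃ i, {e | e ∈ (A.P2 i).edges}) ∪ {e | e ∈ A.pstar.edges})) := by
      intro e he
      revert he
      induction e using Sym2.ind with
      | _ x y =>
        intro he
        rcases (A.adj_iff x y).mp (Ghat.mem_edgeSet.mp he) with
          ⟨u, v, rfl, rfl, h⟩ | ⟨i, hi⟩ | ⟨i, hi⟩ | h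
        · exact Or.inl ⟨s(u, v), h, by rw [Sym2.map_pair_eq]⟩
        · exact Or.inr (Or.inl (Set.mem_iUnion.mpr ⟨i, hi⟩))
        · exact Or.inr (Or.inr (Or.inl (Set.mem_iUnion.mpr ⟨i, hi⟩)))
        · exact Or.inr (Or.inr (Or.inr h))
    refine Set.Finite.subset (Set.Finite.subset ?_ hbound) hF.1
    exact ((G.edgeSet.toFinite.image (Sym2.map Sum.inl)).union
        (((Set.finite_iUnion fun i => (A.P1 i).edges.finite_toSet)).union
          ((Set.finite_iUnion fun i => (A.P2 i).edges.finite_toSet).union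
            (A.pstar.edges.finite_toSet))))
  -- untouched copies
  have huntouched1 : ∃ i, ∀ e ∈ (A.P1 i).edges, e ∉ Ehat := by
    apply FC.pigeon _ Ehat hfinhat hbig
    intro i j hij e
    induction e using Sym2.ind with
    | _ x y =>
      intro hi hj
      have hxy : x ≠ y := (Ghat.mem_edgeSet.mp ((A.P1 i).edges_subset_edgeSet hi)).ne
      rcases A.P1_disj i j hij x (Walk.fst_mem_support_of_mem_edges _ hi)
          (Walk.fst_mem_support_of_mem_edges _ hj) with rfl | rfl <;>
        rcases A.P1_disj i j hij y (Walk.snd_mem_support_of_mem_edges _ hi)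
          (Walk.snd_mem_support_of_mem_edges _ hj) with rfl | rfl
      · exact hxy rfl
      · exact FC.P1_no_end_edge A hN2 i hi
      · rw [Sym2.eq_swap] at hi
        exact FC.P1_no_end_edge A hN2 i hi
      · exact hxy rfl
  have huntouched2 : ∃ i, ∀ e ∈ (A.P2 i).edges, e ∉ Ehat := by
    apply FC.pigeon _ Ehat hfinhat hbig
    intro i j hij e
    induction e using Sym2.ind with
    | _ x y =>
      intro hi hj
      have hxy : x ≠ y := (Ghat.mem_edgeSet.mp ((A.P2 i).edges_subset_edgeSet hi)).ne
      rcases A.P2_disj i j hij x (Walk.fst_mem_support_of_mem_edges _ hi)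
          (Walk.fst_mem_support_of_mem_edges _ hj) with rfl | rfl <;>
        rcases A.P2_disj i j hij y (Walk.snd_mem_support_of_mem_edges _ hi)
          (Walk.snd_mem_support_of_mem_edges _ hj) with rfl | rfl
      · exact hxy rfl
      · exact FC.P2_no_end_edge A hN2 i hi
      · rw [Sym2.eq_swap] at hi
        exact FC.P2_no_end_edge A hN2 i hi
      · exact hxy rfl
  -- the induced cut in G
  set E'' : Set (Sym2 V) := {e | e ∈ G.edgeSet ∧ Sym2.map Sum.inl e ∈ Ehat} with hE''def
  have hsub'' : E'' ⊆ G.edgeSet := fun e he => he.1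
  have hcard'' : E''.ncard ≤ Ehat.ncard := by
    have himg : Sym2.map Sum.inl '' E'' ⊆ Ehat := by
      rintro _ ⟨e, he, rfl⟩; exact he.2
    calc E''.ncard = (Sym2.map Sum.inl '' E'').ncard :=
          (Set.ncard_image_of_injective _ (Sym2.map.injective Sum.inl_injective)).symm
      _ ≤ Ehat.ncard := Set.ncard_le_ncard himg hfinhat
  -- the homomorphism into the deleted augmented graph
  let φ : G.deleteEdges E'' →g Ghat.deleteEdges Ehat :=
    ⟨Sum.inl, by
      intro a b hab
      rw [SimpleGraph.deleteEdges_adj] at hab ⊢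
      refine ⟨(A.adj_iff _ _).mpr (Or.inl ⟨a, b, rfl, rfl, hab.1⟩), ?_⟩
      intro hmem
      exact hab.2 ⟨G.mem_edgeSet.mpr hab.1, by rw [Sym2.map_pair_eq]; exact hmem⟩⟩
  have hφinj : Function.Injective (φ : V → V ⊕ W) := Sum.inl_injective
  have hφcoe : ⇑φ = (Sum.inl : V → V ⊕ W) := rfl
  -- short-path contradiction
  have hshort : ∀ (q : (Ghat.deleteEdges Ehat).Walk (Sum.inl s1) (Sum.inl s3)),
      q.IsPath → q.length ≤ 2 * Fintype.card V - 1 →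
      q.mapLe (SimpleGraph.deleteEdges_le Ehat) ≠ A.pstar → False := by
    intro q hq hl hne
    have h2 := hF.2.2 q hq hne
    rw [A.pstar_length] at h2
    omega
  have hn13 : ¬ (G.deleteEdges E'').Reachable s1 s3 := by
    intro hr
    obtain ⟨w⟩ := hr
    have hp := w.bypass_isPath
    have hlen : w.bypass.length < Fintype.card V := hp.length_lt
    apply hshort (w.bypass.map φ) (Walk.map_isPath_of_injective hφinj hp)
    · rw [Walk.length_map]; omega
    · intro heqq
      have h2 := congrArg Walk.length heqq
      rw [FC.length_mapLe, Walk.length_map, A.pstar_length] at h2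
      omega
  have hn12 : ¬ (G.deleteEdges E'').Reachable s1 s2 := by
    intro hr
    obtain ⟨w⟩ := hr
    have hp := w.bypass_isPath
    have hlen : w.bypass.length < Fintype.card V := hp.length_lt
    by_cases h3 : s3 ∈ w.bypass.support
    · exact hn13 ⟨w.bypass.takeUntil s3 h3⟩
    · obtain ⟨j, hj⟩ := huntouched2
      set w2 := (A.P2 j).toDeleteEdges Ehat hj with hw2def
      have hw2supp : w2.support = (A.P2 j).support := Walk.support_transfer _ _
      have hw2len : w2.length = Fintype.card V := by
        rw [hw2def, Walk.length_transfer, A.P2_length]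
      have hq : ((w.bypass.map φ).append w2).IsPath := by
        rw [Walk.isPath_def, Walk.support_append]
        apply List.Nodup.append
        · exact (Walk.map_isPath_of_injective hφinj hp).support_nodup
        · rw [hw2supp]
          exact List.Nodup.of_cons
            ((Walk.support_eq_cons _ ▸ (A.P2_isPath j).support_nodup))
        · intro v hv1 hv2
          rw [Walk.support_map, hφcoe, List.mem_map] at hv1
          obtain ⟨z, hz, rfl⟩ := hv1
          rw [hw2supp] at hv2
          have hv2' : (Sum.inl z : V ⊕ W) ∈ (A.P2 j).support := List.mem_of_mem_tail hv2
          rcases FC.inl_mem_P2 A hv2' with rfl | rfl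
          · have hnd := (A.P2_isPath j).support_nodup
            rw [Walk.support_eq_cons] at hnd
            exact (List.nodup_cons.mp hnd).1 hv2
          · exact h3 hz
      apply hshort _ hq
      · rw [Walk.length_append, Walk.length_map, hw2len]
        omega
      · intro heqq
        have hs2mem : Sum.inl s2 ∈
            (((w.bypass.map φ).append w2).mapLe (SimpleGraph.deleteEdges_le Ehat)).support := by
          rw [FC.support_mapLe]
          exact (Walk.mem_support_append_iff _ _).mpr (Or.inl (Walk.end_mem_support _))
        rw [heqq] at hs2mem
        exact hs2ps hs2mem
  have hn23 : ¬ (G.deleteEdges E'').Reachable s2 s3 := by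
    intro hr
    obtain ⟨w⟩ := hr
    have hp := w.bypass_isPath
    have hlen : w.bypass.length < Fintype.card V := hp.length_lt
    by_cases h1' : s1 ∈ w.bypass.support
    · exact hn13 ⟨w.bypass.dropUntil s1 h1'⟩
    · obtain ⟨j, hj⟩ := huntouched1
      set w1 := (A.P1 j).toDeleteEdges Ehat hj with hw1def
      have hw1supp : w1.support = (A.P1 j).support := Walk.support_transfer _ _
      have hw1len : w1.length = Fintype.card V := by
        rw [hw1def, Walk.length_transfer, A.P1_length]
      have hq : (w1.append (w.bypass.map φ)).IsPath := by
        rw [Walk.isPath_def, Walk.support_append]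
        apply List.Nodup.append
        · rw [hw1supp]; exact (A.P1_isPath j).support_nodup
        · exact List.Nodup.of_cons
            ((Walk.support_eq_cons _ ▸
              (Walk.map_isPath_of_injective hφinj hp).support_nodup))
        · intro v hv1 hv2
          have hv2' := List.mem_of_mem_tail hv2
          rw [Walk.support_map, hφcoe, List.mem_map] at hv2'
          obtain ⟨z, hz, rfl⟩ := hv2'
          rw [hw1supp] at hv1
          rcases FC.inl_mem_P1 A hv1 with rfl | rfl
          · exact h1' hz
          · have hnd := (Walk.map_isPath_of_injective hφinj hp).support_nodup
            rw [Walk.support_eq_cons] at hnd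
            exact (List.nodup_cons.mp hnd).1 hv2
      apply hshort _ hq
      · rw [Walk.length_append, Walk.length_map, hw1len]
        omega
      · intro heqq
        have hs2mem : Sum.inl s2 ∈
            ((w1.append (w.bypass.map φ)).mapLe (SimpleGraph.deleteEdges_le Ehat)).support := by
          rw [FC.support_mapLe]
          exact (Walk.mem_support_append_iff _ _).mpr (Or.inl (Walk.end_mem_support _))
        rw [heqq] at hs2mem
        exact hs2ps hs2mem
  have hdis'' : Disconnects G E'' s1 s2 s3 := ⟨hn12, hn13, hn23⟩
  exact le_trans (Nat.sInf_le ⟨E'', hsub'', hdis'', rfl⟩) hcard''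

end DirB

/-- The minimum size of a Force Path Cut solution for `(Ĝ, p*)` equals
the minimum size of an edge set `E' ⊆ E` disconnecting the three terminals pairwise in
`G`; in particular, every minimum-size disconnecting edge set of `G` is a minimum-size
Force Path Cut solution for `(Ĝ, p*)`. -/
theorem stmt4 {V W : Type*} [Fintype V] [DecidableEq V]
    (G : SimpleGraph V) [DecidableRel G.Adj] (s1 s2 s3 : V)
    (h12 : s1 ≠ s2) (h13 : s1 ≠ s3) (h23 : s2 ≠ s3)
    (Ghat : SimpleGraph (V ⊕ W))
    (A : AugSpec G s1 s2 s3 (Fintype.card V) G.edgeFinset.card Ghat)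
    (hex : ∃ E' : Set (Sym2 V), E' ⊆ G.edgeSet ∧ Disconnects G E' s1 s2 s3) :
    sInf {n : ℕ | ∃ Ehat : Set (Sym2 (V ⊕ W)), FPCSol Ghat A.pstar Ehat ∧ Ehat.ncard = n}
        = sInf {n : ℕ | ∃ E' : Set (Sym2 V),
            E' ⊆ G.edgeSet ∧ Disconnects G E' s1 s2 s3 ∧ E'.ncard = n} ∧
      ∀ E' : Set (Sym2 V), E' ⊆ G.edgeSet → Disconnects G E' s1 s2 s3 →
        E'.ncard = sInf {n : ℕ | ∃ E'' : Set (Sym2 V),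
            E'' ⊆ G.edgeSet ∧ Disconnects G E'' s1 s2 s3 ∧ E''.ncard = n} →
        (FPCSol Ghat A.pstar (Sym2.map (Sum.inl : V → V ⊕ W) '' E') ∧
          (Sym2.map (Sum.inl : V → V ⊕ W) '' E').ncard = sInf {n : ℕ |
            ∃ Ehat : Set (Sym2 (V ⊕ W)), FPCSol Ghat A.pstar Ehat ∧ Ehat.ncard = n}) := by
  obtain ⟨E₀, hE₀sub, hE₀dis⟩ := hex
  have hN : 3 ≤ Fintype.card V := by
    have h : ({s1, s2, s3} : Finset V).card = 3 := by
      rw [Finset.card_insert_of_notMem (by simp [h12, h13]),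
        Finset.card_insert_of_notMem (by simp [h23]), Finset.card_singleton]
    calc 3 = ({s1, s2, s3} : Finset V).card := h.symm
      _ ≤ (Finset.univ : Finset V).card := Finset.card_le_univ _
      _ = Fintype.card V := rfl
  have hSCne : {n : ℕ | ∃ E' : Set (Sym2 V),
      E' ⊆ G.edgeSet ∧ Disconnects G E' s1 s2 s3 ∧ E'.ncard = n}.Nonempty :=
    ⟨E₀.ncard, E₀, hE₀sub, hE₀dis, rfl⟩
  obtain ⟨Emin, hmsub, hmdis, hmcard⟩ := Nat.sInf_mem hSCne
  have hFA : FPCSol Ghat A.pstar (Sym2.map Sum.inl '' Emin) :=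
    FC.dirA A hN h12 h13 h23 Emin hmsub hmdis
  have himg : (Sym2.map (Sum.inl : V → V ⊕ W) '' Emin).ncard = Emin.ncard :=
    Set.ncard_image_of_injective _ (Sym2.map.injective Sum.inl_injective)
  have hle1 : sInf {n : ℕ | ∃ Ehat : Set (Sym2 (V ⊕ W)),
        FPCSol Ghat A.pstar Ehat ∧ Ehat.ncard = n}
      ≤ sInf {n : ℕ | ∃ E' : Set (Sym2 V),
        E' ⊆ G.edgeSet ∧ Disconnects G E' s1 s2 s3 ∧ E'.ncard = n} :=
    Nat.sInf_le ⟨_, hFA, by rw [himg, hmcard]⟩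
  have hSFne : {n : ℕ | ∃ Ehat : Set (Sym2 (V ⊕ W)),
      FPCSol Ghat A.pstar Ehat ∧ Ehat.ncard = n}.Nonempty := ⟨_, _, hFA, rfl⟩
  obtain ⟨Em, hFm, hcardm⟩ := Nat.sInf_mem hSFne
  have hle2 : sInf {n : ℕ | ∃ E' : Set (Sym2 V),
        E' ⊆ G.edgeSet ∧ Disconnects G E' s1 s2 s3 ∧ E'.ncard = n}
      ≤ sInf {n : ℕ | ∃ Ehat : Set (Sym2 (V ⊕ W)),
        FPCSol Ghat A.pstar Ehat ∧ Ehat.ncard = n} := by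
    rw [← hcardm]
    exact FC.dirB A h12 h13 h23 Em hFm E₀ hE₀sub hE₀dis
  have heq := le_antisymm hle1 hle2
  refine ⟨heq, ?_⟩
  intro E' hs hd hc
  refine ⟨FC.dirA A hN h12 h13 h23 E' hs hd, ?_⟩
  have himg' : (Sym2.map (Sum.inl : V → V ⊕ W) '' E').ncard = E'.ncard :=
    Set.ncard_image_of_injective _ (Sym2.map.injective Sum.inl_injective)
  rw [himg', hc, heq]
end

section
/- Let G=(V,E) be an undirected unweighted graph with three distinct terminals s1,s2,s3, and let Ĝ with target path p* be the augmented graph built from G. If Ê'⊆Ê is a Force Path Cut solution for (Ĝ,p*) with |Ê'| < M, then Ê'∩E disconnects s1, s2, and s3 pairwise in G. -/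
/-- In a path of length at least 2, the two endpoints are not joined by an edge
of the path. -/
lemma ends_notMem_edges {α : Type*} {G : SimpleGraph α} {a b : α} (p : G.Walk a b)
    (hp : p.IsPath) (hl : 2 ≤ p.length) : s(a, b) ∉ p.edges := by
  cases p with
  | nil => simp at hl
  | cons h q =>
    rw [SimpleGraph.Walk.edges_cons]
    intro hmem
    rcases List.mem_cons.mp hmem with h1 | h2
    · have hbc := Sym2.congr_right.mp h1
      subst hbc
      have hq : q.IsPath := hp.of_cons
      rw [SimpleGraph.Walk.isPath_iff_eq_nil] at hq
      subst hq
      simp at hl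
    · have : a ∈ q.support := q.fst_mem_support_of_mem_edges h2
      exact ((SimpleGraph.Walk.cons_isPath_iff h q).mp hp).2 this

/-- An edge of a walk has two distinct endpoints, each in the support. -/
lemma edge_endpoints {α : Type*} {G : SimpleGraph α} {a b : α} (p : G.Walk a b)
    (e : Sym2 α) :
    e ∈ p.edges → ∃ x y, e = s(x, y) ∧ x ≠ y ∧ x ∈ p.support ∧ y ∈ p.support := by
  induction e using Sym2.ind with
  | _ x y =>
    intro he
    exact ⟨x, y, rfl, G.ne_of_adj (p.edges_subset_edgeSet he),
      p.fst_mem_support_of_mem_edges he, p.snd_mem_support_of_mem_edges he⟩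

/-- If `Ê'` is a Force Path Cut solution for `(Ĝ, p*)` with
`|Ê'| < M`, then `Ê' ∩ E` disconnects the three terminals pairwise in `G`. -/
theorem stmt5 {V W : Type*} [Fintype V] [DecidableEq V]
    (G : SimpleGraph V) [DecidableRel G.Adj] (s1 s2 s3 : V)
    (h12 : s1 ≠ s2) (h13 : s1 ≠ s3) (h23 : s2 ≠ s3)
    (Ghat : SimpleGraph (V ⊕ W))
    (A : AugSpec G s1 s2 s3 (Fintype.card V) G.edgeFinset.card Ghat)
    (Ehat : Set (Sym2 (V ⊕ W))) (hsol : FPCSol Ghat A.pstar Ehat)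
    (hsize : Ehat.ncard < G.edgeFinset.card) :
    Disconnects G {e | e ∈ G.edgeSet ∧ Sym2.map Sum.inl e ∈ Ehat} s1 s2 s3 := by
  classical
  obtain ⟨hEsub, hEavoid, hmin⟩ := hsol
  set E'' : Set (Sym2 V) := {e | e ∈ G.edgeSet ∧ Sym2.map Sum.inl e ∈ Ehat} with hE''
  have hN2 : 2 ≤ Fintype.card V := Fintype.one_lt_card_iff.mpr ⟨s1, s2, h12⟩
  have hps_len : A.pstar.length = 2 * Fintype.card V - 1 := A.pstar_length
  have hps2 : 2 ≤ A.pstar.length := by omega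
  -- the graph homomorphism from `G` minus the induced cut into `Ĝ` minus the cut
  have fmap : ∀ u v : V, (G.deleteEdges E'').Adj u v →
      (Ghat.deleteEdges Ehat).Adj (Sum.inl u) (Sum.inl v) := by
    intro u v h
    rw [SimpleGraph.deleteEdges_adj] at h ⊢
    obtain ⟨hadj, hne⟩ := h
    refine ⟨(A.adj_iff _ _).mpr (Or.inl ⟨u, v, rfl, rfl, hadj⟩), fun hmem => ?_⟩
    exact hne ⟨hadj, by simpa [Sym2.map_pair_eq] using hmem⟩
  let f : (G.deleteEdges E'') →g (Ghat.deleteEdges Ehat) := ⟨Sum.inl, fmap _ _⟩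
  -- no "copied" edge of `G` lies on `pstar`
  have hGps : ∀ u v : V, s((Sum.inl u : V ⊕ W), Sum.inl v) ∉ A.pstar.edges := by
    intro u v hmem
    have hadj : Ghat.Adj (Sum.inl u) (Sum.inl v) := A.pstar.edges_subset_edgeSet hmem
    have huv : u ≠ v := fun h => (Ghat.ne_of_adj hadj) (by rw [h])
    have hu := A.pstar.fst_mem_support_of_mem_edges hmem
    have hv := A.pstar.snd_mem_support_of_mem_edges hmem
    have hu' : u = s1 ∨ u = s3 := by
      by_contra hc
      push_neg at hc
      obtain ⟨x, hx⟩ := A.pstar_new _ hu (by simp [hc.1]) (by simp [hc.2])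
      simp at hx
    have hv' : v = s1 ∨ v = s3 := by
      by_contra hc
      push_neg at hc
      obtain ⟨x, hx⟩ := A.pstar_new _ hv (by simp [hc.1]) (by simp [hc.2])
      simp at hx
    have hend := ends_notMem_edges A.pstar A.pstar_isPath hps2
    rcases hu' with rfl | rfl <;> rcases hv' with rfl | rfl
    · exact huv rfl
    · exact hend hmem
    · exact hend (by rwa [Sym2.eq_swap] at hmem)
    · exact huv rfl
  -- no edge of any `P1 i` or `P2 i` lies on `pstar`
  have hP1ps : ∀ i, ∀ e ∈ (A.P1 i).edges, e ∉ A.pstar.edges := by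
    intro i e h1 h2
    obtain ⟨x, y, rfl, hxy, hx1, hy1⟩ := edge_endpoints _ e h1
    have hx := A.P1_pstar_disj i x hx1 (A.pstar.fst_mem_support_of_mem_edges h2)
    have hy := A.P1_pstar_disj i y hy1 (A.pstar.snd_mem_support_of_mem_edges h2)
    exact hxy (hx.trans hy.symm)
  have hP2ps : ∀ i, ∀ e ∈ (A.P2 i).edges, e ∉ A.pstar.edges := by
    intro i e h1 h2
    obtain ⟨x, y, rfl, hxy, hx1, hy1⟩ := edge_endpoints _ e h1
    have hx := A.P2_pstar_disj i x hx1 (A.pstar.fst_mem_support_of_mem_edges h2)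
    have hy := A.P2_pstar_disj i y hy1 (A.pstar.snd_mem_support_of_mem_edges h2)
    exact hxy (hx.trans hy.symm)
  -- key: no s1-s3 walk in the cut graph of length ≤ pstar avoiding pstar's edges
  have key : ∀ (w : (Ghat.deleteEdges Ehat).Walk (Sum.inl s1) (Sum.inl s3)),
      w.length ≤ A.pstar.length → (∀ e ∈ w.edges, e ∉ A.pstar.edges) → False := by
    intro w hwl hwe
    have hq := w.bypass_isPath
    have hne : (w.bypass.mapLe (SimpleGraph.deleteEdges_le Ehat)) ≠ A.pstar := by
      intro heq
      have h0 : A.pstar.edges ≠ [] := by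
        intro h
        have h3 := A.pstar.length_edges
        rw [h] at h3
        simp at h3
        omega
      obtain ⟨e, he⟩ := List.exists_mem_of_ne_nil _ h0
      have he' : e ∈ w.bypass.edges := by
        rw [← heq] at he
        simpa [SimpleGraph.Walk.mapLe, SimpleGraph.Walk.edges_map,
          SimpleGraph.Hom.coe_ofLE, Sym2.map_id] using he
      exact hwe e (w.edges_bypass_subset he') he
    have h1 := hmin w.bypass hq hne
    have h2 := w.length_bypass_le
    omega
  -- Ehat is finite
  have hEfin : Ehat.Finite := by
    apply Set.Finite.subset (s := (Sym2.map Sum.inl '' G.edgeSet) ∪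
      ((⋃ i, {e | e ∈ (A.P1 i).edges}) ∪ ((⋃ i, {e | e ∈ (A.P2 i).edges}) ∪
        {e | e ∈ A.pstar.edges})))
    · refine Set.Finite.union ((Set.toFinite G.edgeSet).image _)
        (Set.Finite.union (Set.finite_iUnion fun i => List.finite_toSet _)
          (Set.Finite.union (Set.finite_iUnion fun i => List.finite_toSet _)
            (List.finite_toSet _)))
    · intro e he
      have he' := hEsub he
      revert he'
      induction e using Sym2.ind with
      | _ x y =>
        intro he'
        rw [SimpleGraph.mem_edgeSet, A.adj_iff] at he'
        rcases he' with ⟨u, v, rfl, rfl, huv⟩ | ⟨i, hi⟩ | ⟨i, hi⟩ | hi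
        · exact Or.inl ⟨s(u, v), huv, by simp [Sym2.map_pair_eq]⟩
        · exact Or.inr (Or.inl (Set.mem_iUnion.mpr ⟨i, hi⟩))
        · exact Or.inr (Or.inr (Or.inl (Set.mem_iUnion.mpr ⟨i, hi⟩)))
        · exact Or.inr (Or.inr (Or.inr hi))
  -- pigeonhole: some P1 (resp. P2) path avoids Ehat entirely
  have hP1good : ∃ i, ∀ e ∈ (A.P1 i).edges, e ∉ Ehat := by
    by_contra hc
    push_neg at hc
    choose g hg1 hg2 using hc
    have hinj : Function.Injective g := by
      intro i j h
      by_contra hne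
      obtain ⟨x, y, hxy0, hxy, hx1, hy1⟩ := edge_endpoints _ (g i) (hg1 i)
      have h2 : g i ∈ (A.P1 j).edges := h ▸ hg1 j
      have hgi := hg1 i
      rw [hxy0] at h2 hgi
      have hx := A.P1_disj i j hne x hx1 ((A.P1 j).fst_mem_support_of_mem_edges h2)
      have hy := A.P1_disj i j hne y hy1 ((A.P1 j).snd_mem_support_of_mem_edges h2)
      have hend : s((Sum.inl s1 : V ⊕ W), Sum.inl s2) ∉ (A.P1 i).edges :=
        ends_notMem_edges _ (A.P1_isPath i) (by rw [A.P1_length]; exact hN2)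
      rcases hx with rfl | rfl <;> rcases hy with hy | hy
      · exact hxy hy.symm
      · exact hend (hy ▸ hgi)
      · rw [Sym2.eq_swap] at hgi
        exact hend (hy ▸ hgi)
      · exact hxy (by rw [hy])
    have hsub : ↑(Finset.univ.image g) ⊆ Ehat := by
      intro e he
      simp only [Finset.coe_image, Set.mem_image] at he
      obtain ⟨i, _, rfl⟩ := he
      exact hg2 i
    have hcard : (Finset.univ.image g).card = G.edgeFinset.card + 1 := by
      rw [Finset.card_image_of_injective _ hinj, Finset.card_univ, Fintype.card_fin]
    have hle := Set.ncard_le_ncard hsub hEfin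
    rw [Set.ncard_coe_finset, hcard] at hle
    omega
  have hP2good : ∃ i, ∀ e ∈ (A.P2 i).edges, e ∉ Ehat := by
    by_contra hc
    push_neg at hc
    choose g hg1 hg2 using hc
    have hinj : Function.Injective g := by
      intro i j h
      by_contra hne
      obtain ⟨x, y, hxy0, hxy, hx1, hy1⟩ := edge_endpoints _ (g i) (hg1 i)
      have h2 : g i ∈ (A.P2 j).edges := h ▸ hg1 j
      have hgi := hg1 i
      rw [hxy0] at h2 hgi
      have hx := A.P2_disj i j hne x hx1 ((A.P2 j).fst_mem_support_of_mem_edges h2)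
      have hy := A.P2_disj i j hne y hy1 ((A.P2 j).snd_mem_support_of_mem_edges h2)
      have hend : s((Sum.inl s2 : V ⊕ W), Sum.inl s3) ∉ (A.P2 i).edges :=
        ends_notMem_edges _ (A.P2_isPath i) (by rw [A.P2_length]; exact hN2)
      rcases hx with rfl | rfl <;> rcases hy with hy | hy
      · exact hxy hy.symm
      · exact hend (hy ▸ hgi)
      · rw [Sym2.eq_swap] at hgi
        exact hend (hy ▸ hgi)
      · exact hxy (by rw [hy])
    have hsub : ↑(Finset.univ.image g) ⊆ Ehat := by
      intro e he
      simp only [Finset.coe_image, Set.mem_image] at he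
      obtain ⟨i, _, rfl⟩ := he
      exact hg2 i
    have hcard : (Finset.univ.image g).card = G.edgeFinset.card + 1 := by
      rw [Finset.card_image_of_injective _ hinj, Finset.card_univ, Fintype.card_fin]
    have hle := Set.ncard_le_ncard hsub hEfin
    rw [Set.ncard_coe_finset, hcard] at hle
    omega
  -- edges of a mapped G-path avoid pstar
  have hmapedge : ∀ {u v : V} (p : (G.deleteEdges E'').Walk u v),
      ∀ e ∈ (p.map f).edges, e ∉ A.pstar.edges := by
    intro u v p e he
    rw [SimpleGraph.Walk.edges_map, List.mem_map] at he
    obtain ⟨e0, _, rfl⟩ := he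
    induction e0 using Sym2.ind with
    | _ x y => exact hGps x y
  unfold Disconnects
  refine ⟨?_, ?_, ?_⟩
  -- case s1-s2
  · intro hR
    obtain ⟨w0⟩ := hR
    have hp0 := w0.bypass_isPath
    have hl0 : w0.bypass.length < Fintype.card V := hp0.length_lt
    obtain ⟨i, hi⟩ := hP2good
    have htr : ∀ e ∈ (A.P2 i).edges, e ∈ (Ghat.deleteEdges Ehat).edgeSet := by
      intro e he
      rw [SimpleGraph.edgeSet_deleteEdges]
      exact ⟨(A.P2 i).edges_subset_edgeSet he, hi e he⟩
    refine key ((w0.bypass.map f).append ((A.P2 i).transfer _ htr)) ?_ ?_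
    · rw [SimpleGraph.Walk.length_append, SimpleGraph.Walk.length_map,
        SimpleGraph.Walk.length_transfer, A.P2_length]
      omega
    · intro e he
      rw [SimpleGraph.Walk.edges_append, List.mem_append] at he
      rcases he with he | he
      · exact hmapedge w0.bypass e he
      · rw [SimpleGraph.Walk.edges_transfer] at he
        exact hP2ps i e he
  -- case s1-s3
  · intro hR
    obtain ⟨w0⟩ := hR
    have hp0 := w0.bypass_isPath
    have hl0 : w0.bypass.length < Fintype.card V := hp0.length_lt
    refine key (w0.bypass.map f) ?_ ?_
    · rw [SimpleGraph.Walk.length_map]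
      omega
    · exact hmapedge w0.bypass
  -- case s2-s3
  · intro hR
    obtain ⟨w0⟩ := hR
    have hp0 := w0.bypass_isPath
    have hl0 : w0.bypass.length < Fintype.card V := hp0.length_lt
    obtain ⟨j, hj⟩ := hP1good
    have htr : ∀ e ∈ (A.P1 j).edges, e ∈ (Ghat.deleteEdges Ehat).edgeSet := by
      intro e he
      rw [SimpleGraph.edgeSet_deleteEdges]
      exact ⟨(A.P1 j).edges_subset_edgeSet he, hj e he⟩
    refine key (((A.P1 j).transfer _ htr).append (w0.bypass.map f)) ?_ ?_
    · rw [SimpleGraph.Walk.length_append, SimpleGraph.Walk.length_map,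
        SimpleGraph.Walk.length_transfer, A.P1_length]
      omega
    · intro e he
      rw [SimpleGraph.Walk.edges_append, List.mem_append] at he
      rcases he with he | he
      · rw [SimpleGraph.Walk.edges_transfer] at he
        exact hP1ps j e he
      · exact hmapedge w0.bypass e he
end
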